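/- arXiv:2510.04675 — 12 statements merged into one kernel-verified Lean document; each statement's English description precedes it below -/
import Mathlib

section
/- Let q be a prime power and let d, e be positive integers such that (x^d)^e = x for every x ∈ F_q (i.e. x ↦ x^d is a permutation of F_q whose inverse permutation is x ↦ x^e). Then the monomials x^{d+1} and x^{e+1} are projectively equivalent: there exists a collineation of PG(2,q) mapping S_{x^{d+1}} onto S_{x^{e+1}}. -/
/-!
The collineation is induced by the coordinate swap `[x : y : z] ↦ [x : z : y]`. It exchanges
`[0 : 0 : 1]` and `[0 : 1 : 0]`, and for `x ≠ 0` it sends `[x : x^(d+1) : 1]` to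
`[x : 1 : x^(d+1)] = [y : y^(e+1) : 1]` with `y = x⁻¹ ^ d`, because `y ^ e = x⁻¹`. As
`(x ^ e) ^ d = x ^ (d * e) = x` too, the swap, an involution, also maps `S_{x^(e+1)}` into
`S_{x^(d+1)}`.
-/

open scoped LinearAlgebra.Projectivization

/-- Collinearity of three points of `PG(2,q)`: their representing vectors span a
linear subspace of dimension at most `2`. -/
def Collin3 {F : Type*} [Field F] (p₁ p₂ p₃ : ℙ F (Fin 3 → F)) : Prop :=
  Module.finrank F
    (Submodule.span F ({p₁.rep, p₂.rep, p₃.rep} : Set (Fin 3 → F))) ≤ 2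

/-- A collineation of `PG(2,q)`: a bijection of the point set preserving collinearity
in both directions. -/
def IsCollineation {F : Type*} [Field F]
    (π : ℙ F (Fin 3 → F) ≃ ℙ F (Fin 3 → F)) : Prop :=
  ∀ p₁ p₂ p₃ : ℙ F (Fin 3 → F), Collin3 p₁ p₂ p₃ ↔ Collin3 (π p₁) (π p₂) (π p₃)

/-- The `(q+1)`-set `S_f = {[x : f(x) : 1] | x ∈ F} ∪ {[0 : 1 : 0]}` in `PG(2,q)`. -/
def Sf {F : Type*} [Field F] (f : F → F) : Set (ℙ F (Fin 3 → F)) :=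
  {p | (∃ x : F, p = Projectivization.mk F ![x, f x, 1] (by
          intro h
          have := congrFun h 2
          simp at this)) ∨
    p = Projectivization.mk F ![0, 1, 0] (by
          intro h
          have := congrFun h 1
          simp at this)}

namespace Projectivization

variable {K V : Type*} [Field K] [AddCommGroup V] [Module K V]

theorem submodule_linearEquiv_smul (g : V ≃ₗ[K] V) (p : ℙ K V) :
    (g • p).submodule = p.submodule.map (g : V →ₗ[K] V) := by
  induction p using Projectivization.ind with
  | h v hv => simp [submodule_mk, Submodule.map_span]

end Projectivization

open Projectivization

section Collineation

variable {F : Type*} [Field F]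

theorem collin3_iff_finrank_sup (p₁ p₂ p₃ : ℙ F (Fin 3 → F)) :
    Collin3 p₁ p₂ p₃ ↔
      Module.finrank F ↥(p₁.submodule ⊔ (p₂.submodule ⊔ p₃.submodule)) ≤ 2 := by
  rw [Collin3, Submodule.span_insert, Submodule.span_insert, ← submodule_eq, ← submodule_eq,
    ← submodule_eq]

theorem isCollineation_toPerm (g : (Fin 3 → F) ≃ₗ[F] (Fin 3 → F)) :
    IsCollineation (MulAction.toPerm g : Equiv.Perm (ℙ F (Fin 3 → F))) := by
  intro p₁ p₂ p₃
  rw [collin3_iff_finrank_sup, collin3_iff_finrank_sup, MulAction.toPerm_apply, MulAction.toPerm_apply, MulAction.toPerm_apply,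
    submodule_linearEquiv_smul, submodule_linearEquiv_smul, submodule_linearEquiv_smul,
    ← Submodule.map_sup, ← Submodule.map_sup, LinearEquiv.finrank_map_eq]

end Collineation

section SwapYZ

variable (F : Type*) [Field F]

noncomputable def swapYZ : (Fin 3 → F) ≃ₗ[F] (Fin 3 → F) :=
  LinearEquiv.funCongrLeft F F (Equiv.swap 1 2)

variable {F}

theorem swapYZ_apply (a b c : F) : swapYZ F ![a, b, c] = ![a, c, b] := by
  funext i
  fin_cases i <;> simp [swapYZ, LinearEquiv.funCongrLeft_apply, LinearMap.funLeft_apply,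
    Equiv.swap_apply_of_ne_of_ne]

theorem swapYZ_smul_swapYZ_smul (p : ℙ F (Fin 3 → F)) : swapYZ F • swapYZ F • p = p := by
  have : swapYZ F * swapYZ F = 1 :=
    LinearEquiv.ext fun v => funext fun i => by
      simp [swapYZ, LinearEquiv.funCongrLeft_apply, LinearMap.funLeft_apply]
  rw [smul_smul, this, one_smul]

theorem swapYZ_smul_mem_Sf_pow {d e : ℕ} (h : ∀ x : F, (x ^ d) ^ e = x) {p : ℙ F (Fin 3 → F)}
    (hp : p ∈ Sf (fun x : F => x ^ (d + 1))) : swapYZ F • p ∈ Sf (fun x : F => x ^ (e + 1)) := by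
  rcases hp with ⟨x, rfl⟩ | rfl
  · rcases eq_or_ne x 0 with rfl | hx
    · right
      rw [smul_mk, mk_eq_mk_iff', LinearEquiv.smul_def, swapYZ_apply]
      exact ⟨1, by simp⟩
    · left
      refine ⟨x⁻¹ ^ d, ?_⟩
      rw [smul_mk, mk_eq_mk_iff', LinearEquiv.smul_def, swapYZ_apply]
      refine ⟨x ^ (d + 1), ?_⟩
      have hinv : (x⁻¹ ^ d) ^ e = x⁻¹ := by rw [inv_pow, inv_pow, h]
      simp only [pow_succ _ e, hinv]
      ext i
      fin_cases i <;> simp <;> field_simp <;> ring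
  · left
    refine ⟨0, ?_⟩
    rw [smul_mk, mk_eq_mk_iff', LinearEquiv.smul_def, swapYZ_apply]
    exact ⟨1, by simp⟩

end SwapYZ

theorem stmt4_general {F : Type*} [Field F] (d e : ℕ)
    (h : ∀ x : F, (x ^ d) ^ e = x) :
    ∃ π : ℙ F (Fin 3 → F) ≃ ℙ F (Fin 3 → F), IsCollineation π ∧
      π '' Sf (fun x : F => x ^ (d + 1)) = Sf (fun x : F => x ^ (e + 1)) := by
  have h' : ∀ x : F, (x ^ e) ^ d = x := fun x => by rw [pow_right_comm, h]
  refine ⟨MulAction.toPerm (swapYZ F), isCollineation_toPerm (swapYZ F), ?_⟩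
  refine (Set.mapsTo_iff_image_subset.mp fun p hp => swapYZ_smul_mem_Sf_pow h hp).antisymm
    fun p hp => ⟨swapYZ F • p, swapYZ_smul_mem_Sf_pow h' hp, swapYZ_smul_swapYZ_smul p⟩

theorem stmt4 {F : Type*} [Field F] [Fintype F] (d e : ℕ) (hd : 0 < d) (he : 0 < e)
    (h : ∀ x : F, (x ^ d) ^ e = x) :
    ∃ π : ℙ F (Fin 3 → F) ≃ ℙ F (Fin 3 → F), IsCollineation π ∧
      π '' Sf (fun x : F => x ^ (d + 1)) = Sf (fun x : F => x ^ (e + 1)) :=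
  stmt4_general d e h
end

section
/- Let q be a prime power and let d be an integer with 2 < d < q−1. For a, b ∈ F_q let N(a,b) denote the number of x ∈ F_q with x^d = a·x + b. Then N(a,b) ≤ min(d, q−d+1) for all a, b ∈ F_q. More precisely: (i) if a ≠ 0 and b = 0, then N(a,b) ≤ q−d+1; (ii) if a ≠ 0 and b ≠ 0, then N(a,b) ≤ q−d; (iii) if a = 0 and b ≠ 0, then N(a,b) ≤ q−d−1. -/
/-! Every solution of `x ^ d = a * x + b` is a root of `X ^ d - (a * X + b)`, which has degree `d`.
For `x ≠ 0` we have `x ^ (q - 1) = 1`, so the equation becomes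
`x ^ (q - 1 - d) * (a * x + b) = 1`: a root of a polynomial of degree at most `q - d`
(at most `q - d - 1` when `a = 0`), nonzero because its constant term is `-1`.
The point `x = 0` adds at most one solution, and none when `b ≠ 0`. -/

open Polynomial

theorem Polynomial.ncard_le_natDegree_of_forall_isRoot {R : Type*} [CommRing R] [IsDomain R]
    {p : R[X]} (hp : p ≠ 0) {s : Set R} (hs : ∀ x ∈ s, p.IsRoot x) :
    s.ncard ≤ p.natDegree :=
  calc s.ncard ≤ (p.rootSet R).ncard :=
        Set.ncard_le_ncard (fun x hx => (mem_rootSet.2 ⟨hp, by simpa using hs x hx⟩))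
          (p.rootSet_finite R)
    _ ≤ p.natDegree := p.ncard_rootSet_le R

theorem Polynomial.ncard_setOf_pow_eq_eval_le {R : Type*} [CommRing R] [IsDomain R] {d : ℕ}
    {f : R[X]} (hf : f.natDegree < d) : {x : R | x ^ d = f.eval x}.ncard ≤ d := by
  have hdeg : (X ^ d - f).natDegree = d := by
    rw [natDegree_sub_eq_left_of_natDegree_lt] <;> rw [natDegree_X_pow]; exact hf
  have hne : X ^ d - f ≠ 0 := ne_zero_of_natDegree_gt (n := 0) (by omega)
  calc _ ≤ (X ^ d - f).natDegree :=
        ncard_le_natDegree_of_forall_isRoot hne fun x (hx : x ^ d = f.eval x) => by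
          simp [hx]
    _ = d := hdeg

theorem FiniteField.pow_card_sub_one_sub_mul_eq_one {F : Type*} [Field F] [Fintype F]
    {d : ℕ} (hd : d ≤ Fintype.card F - 1) {x y : F} (hx : x ≠ 0) (hxy : x ^ d = y) :
    x ^ (Fintype.card F - 1 - d) * y = 1 := by
  rw [← hxy, ← pow_add, Nat.sub_add_cancel hd, pow_card_sub_one_eq_one x hx]

theorem FiniteField.ncard_setOf_pow_eq_eval_sdiff_zero_le {F : Type*} [Field F] [Fintype F]
    {d : ℕ} (hd : d < Fintype.card F - 1) (f : F[X]) :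
    ({x : F | x ^ d = f.eval x} \ {0}).ncard ≤ Fintype.card F - 1 - d + f.natDegree := by
  set e := Fintype.card F - 1 - d
  have hroot : ∀ x ∈ {x : F | x ^ d = f.eval x} \ {0}, (X ^ e * f - 1).IsRoot x := by
    rintro x ⟨hx, hx0 : x ≠ 0⟩
    have := pow_card_sub_one_sub_mul_eq_one hd.le hx0 hx
    simp [e, this]
  have hne : X ^ e * f - 1 ≠ 0 := by
    intro h
    simpa [zero_pow (by omega : e ≠ 0)] using congrArg (eval 0) h
  calc _ ≤ (X ^ e * f - 1).natDegree := ncard_le_natDegree_of_forall_isRoot hne hroot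
    _ ≤ e + f.natDegree := by
      refine (natDegree_sub_le _ _).trans (max_le ?_ (by simp))
      exact natDegree_mul_le.trans (by rw [natDegree_X_pow])

theorem stmt5 {F : Type*} [Field F] [Fintype F] (d : ℕ)
    (hd2 : 2 < d) (hdq : d < Fintype.card F - 1) :
    (∀ a b : F, Nat.card {x : F // x ^ d = a * x + b}
      ≤ min d (Fintype.card F - d + 1)) ∧
    (∀ a b : F, a ≠ 0 → b = 0 → Nat.card {x : F // x ^ d = a * x + b}
      ≤ Fintype.card F - d + 1) ∧
    (∀ a b : F, a ≠ 0 → b ≠ 0 → Nat.card {x : F // x ^ d = a * x + b}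
      ≤ Fintype.card F - d) ∧
    (∀ a b : F, a = 0 → b ≠ 0 → Nat.card {x : F // x ^ d = a * x + b}
      ≤ Fintype.card F - d - 1) := by
  let S (a b : F) : Set F := {x | x ^ d = (C a * X + C b).eval x}
  have hcard (a b : F) : Nat.card {x : F // x ^ d = a * x + b} = (S a b).ncard := by
    rw [show S a b = {x | x ^ d = a * x + b} by ext; simp [S]]
    rfl
  have hdiff (a b : F) : (S a b \ {0}).ncard ≤ Fintype.card F - 1 - d + 1 :=
    (FiniteField.ncard_setOf_pow_eq_eval_sdiff_zero_le hdq _).trans (by grw [natDegree_linear_le])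
  have hdiff_eq (a b : F) (hb : b ≠ 0) : S a b \ {0} = S a b :=
    Set.sdiff_singleton_eq_self (by simp [S, zero_pow (by omega : d ≠ 0), hb.symm])
  have hle (a b : F) : Nat.card {x : F // x ^ d = a * x + b} ≤ Fintype.card F - d + 1 := by
    have := Set.pred_ncard_le_ncard_sdiff_singleton (S a b) 0
    have := hdiff a b
    rw [hcard]
    omega
  refine ⟨fun a b => le_min ?_ (hle a b), fun a b _ _ => hle a b, fun a b _ hb => ?_, ?_⟩
  · exact hcard a b ▸ ncard_setOf_pow_eq_eval_le (natDegree_linear_le.trans_lt (by omega))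
  · have := hdiff a b
    rw [hdiff_eq a b hb] at this
    rw [hcard]
    omega
  · rintro a b rfl hb
    have hdeg : (C 0 * X + C b).natDegree = 0 := by simp
    have := FiniteField.ncard_setOf_pow_eq_eval_sdiff_zero_le hdq (C 0 * X + C b)
    rw [hdiff_eq 0 b hb, hdeg] at this
    rw [hcard]
    omega
end

section
/- Let p be a prime, let s > 1, let q = p^s, and let i be a positive integer with i dividing s and i < s. Then for all a, b ∈ F_q, the number of x ∈ F_q satisfying x^{q − p^i} = a·x + b is at most p^i. -/
/-! Multiplying the equation by `x ^ n` and using `x ^ q = x` gives `(a * x + b) * x ^ n = x`.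
If `b ≠ 0`, no solution is zero and `x⁻¹` is a root of `X ^ n - (b * X + a)`, so there are at
most `n` solutions. If `b = 0`, the nonzero solutions satisfy `a * x ^ n = 1`; since `x ↦ x ^ n`
is injective (for `n = p ^ i` it is a power of the Frobenius) there is at most one of them. -/

open Polynomial

section

variable {F : Type*} [Field F] [Fintype F]

theorem pow_card_sub_mul_pow_self {n : ℕ} (hn : n ≤ Fintype.card F) (x : F) :
    x ^ (Fintype.card F - n) * x ^ n = x := by
  rw [← pow_add, Nat.sub_add_cancel hn, FiniteField.pow_card]

theorem ncard_pow_card_sub_eq_mul_le_two {n : ℕ} (hn : n ≤ Fintype.card F)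
    (hinj : Function.Injective fun x : F => x ^ n) (a : F) :
    {x : F | x ^ (Fintype.card F - n) = a * x}.ncard ≤ 2 := by
  have hsub : {x : F | x ^ (Fintype.card F - n) = a * x} ⊆ insert 0 {x | a * x ^ n = 1} := by
    intro x (hx : x ^ (Fintype.card F - n) = a * x)
    rcases eq_or_ne x 0 with hx0 | hx0
    · exact Or.inl hx0
    · have h := pow_card_sub_mul_pow_self hn x
      rw [hx] at h
      exact Or.inr (mul_left_cancel₀ hx0 (by linear_combination h))
  have hone : {x : F | a * x ^ n = 1}.ncard ≤ 1 := by
    refine (Set.ncard_le_one_iff).mpr fun {x y} hx hy => hinj ?_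
    exact mul_left_cancel₀ (left_ne_zero_of_mul_eq_one hx) (hx.trans hy.symm)
  calc _ ≤ (insert 0 {x | a * x ^ n = 1}).ncard := Set.ncard_le_ncard hsub
    _ ≤ 2 := (Set.ncard_insert_le _ _).trans (by omega)

theorem ncard_pow_card_sub_eq_linear_le_of_ne_zero {n : ℕ} (hn2 : 2 ≤ n)
    (hn : n < Fintype.card F) (a : F) {b : F} (hb : b ≠ 0) :
    {x : F | x ^ (Fintype.card F - n) = a * x + b}.ncard ≤ n := by
  set f : F[X] := X ^ n - (C b * X + C a)
  have hlin : (C b * X + C a).degree < (n : WithBot ℕ) :=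
    degree_linear_le.trans_lt (by exact_mod_cast hn2)
  have hf : f.Monic := monic_X_pow_sub hlin
  have hdeg : f.natDegree = n := by
    refine natDegree_eq_of_degree_eq_some ?_
    rw [degree_sub_eq_left_of_degree_lt (by rwa [degree_X_pow]), degree_X_pow]
  have hmaps : ∀ x ∈ {x : F | x ^ (Fintype.card F - n) = a * x + b}, x⁻¹ ∈ f.rootSet F := by
    intro x (hx : x ^ (Fintype.card F - n) = a * x + b)
    have hx0 : x ≠ 0 := by
      rintro rfl
      simp [zero_pow (by omega : Fintype.card F - n ≠ 0), hb.symm] at hx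
    have h := pow_card_sub_mul_pow_self hn.le x
    rw [hx] at h
    rw [hf.mem_rootSet, coe_aeval_eq_eval]
    simp only [f, eval_sub, eval_pow, eval_X, eval_add, eval_mul, eval_C, inv_pow]
    field_simp
    linear_combination -h
  calc _ ≤ (f.rootSet F).ncard :=
        Set.ncard_le_ncard_of_injOn _ hmaps inv_injective.injOn (Set.toFinite _)
    _ ≤ n := hdeg ▸ ncard_rootSet_le f F

theorem ncard_pow_card_sub_eq_linear_le {n : ℕ} (hn2 : 2 ≤ n) (hn : n < Fintype.card F)
    (hinj : Function.Injective fun x : F => x ^ n) (a b : F) :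
    {x : F | x ^ (Fintype.card F - n) = a * x + b}.ncard ≤ n := by
  rcases eq_or_ne b 0 with rfl | hb
  · simpa using (ncard_pow_card_sub_eq_mul_le_two hn.le hinj a).trans hn2
  · exact ncard_pow_card_sub_eq_linear_le_of_ne_zero hn2 hn a hb

end

theorem stmt6_general (p s i : ℕ) (hp : p.Prime) (hi : 0 < i) (hlt : i < s)
    {F : Type*} [Field F] [Fintype F] (hF : Fintype.card F = p ^ s) :
    ∀ a b : F, Nat.card {x : F // x ^ (p ^ s - p ^ i) = a * x + b} ≤ p ^ i := by
  intro a b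
  have : Fact p.Prime := ⟨hp⟩
  have : CharP F p := charP_of_card_eq_prime_pow hF
  have htwo : 2 ≤ p ^ i := hp.two_le.trans (Nat.le_self_pow hi.ne' p)
  have hlt' : p ^ i < Fintype.card F := hF ▸ Nat.pow_lt_pow_right hp.one_lt hlt
  rw [← hF]
  exact ncard_pow_card_sub_eq_linear_le htwo hlt' (iterateFrobenius_inj F p i) a b

theorem stmt6 (p s i : ℕ) (hp : p.Prime) (hs : 1 < s) (hi : 0 < i)
    (hdvd : i ∣ s) (hlt : i < s)
    {F : Type*} [Field F] [Fintype F] (hF : Fintype.card F = p ^ s) :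
    ∀ a b : F, Nat.card {x : F // x ^ (p ^ s - p ^ i) = a * x + b} ≤ p ^ i :=
  stmt6_general p s i hp hi hlt hF
end

section
/- Let q be a prime power, let d ≥ 1 be an integer, and let m = gcd(d, q−1). If m(m−1) ≥ q−1, then the degree of the monomial x^d equals m; that is, for all a, b ∈ F_q the equation x^d = a·x + b has at most m solutions x ∈ F_q, and the equation x^d = 1 has exactly m solutions. -/
/-!
The solutions of `x ^ d = 1` form the group `μ_m` of `m`-th roots of unity, `m = gcd(d, q - 1)`.
For `a = 0` the solutions of `x ^ d = b` form a coset of `μ_m` (or `{0}`). For `a ≠ 0`, the value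
`x ^ d` is constant on `μ_m`-orbits, so the line `y = a x + b` meets each orbit of `F^×` at most
once. Hence the orbits of the nonzero solutions `S` are disjoint, so
`m · |S| ≤ q - 1 ≤ m (m - 1)` and `|S| ≤ m - 1`; the possible solution `x = 0` brings the total
to at most `m`.
-/

theorem Nat.card_subtype_le_card_subtype_ne_add_one {α : Type*} [Finite α] (P : α → Prop)
    (a : α) :
    Nat.card {x // P x} ≤ Nat.card {x // x ≠ a ∧ P x} + 1 := by
  classical
  rw [← Finite.card_option]
  refine Nat.card_le_card_of_injective
    (fun x => if h : x.1 = a then none else some ⟨x.1, h, x.2⟩) fun x y hxy => ?_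
  by_cases hx : x.1 = a <;> by_cases hy : y.1 = a <;> simp only [hx, hy, dite_true, dite_false,
    reduceCtorEq, Option.some.injEq, Subtype.mk.injEq] at hxy
  · exact Subtype.ext (hx.trans hy.symm)
  · exact Subtype.ext hxy

section FiniteField

variable {F : Type*} [Field F] [Finite F] {d : ℕ}

theorem card_pow_eq_one_eq_gcd (hd : d ≠ 0) :
    Nat.card {x : F // x ^ d = 1} = Nat.gcd d (Nat.card F - 1) := by
  have : NeZero d := ⟨hd⟩
  calc Nat.card {x : F // x ^ d = 1}
      = Nat.card (rootsOfUnity d F) := Nat.card_congr <|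
        (Equiv.subtypeEquivRight fun _ =>
          (Polynomial.mem_nthRoots (Nat.pos_of_ne_zero hd)).symm).trans
            (rootsOfUnityEquivNthRoots F d).symm
    _ = Nat.card (powMonoidHom d : Fˣ →* Fˣ).ker := by rw [rootsOfUnity_eq_ker]
    _ = Nat.gcd d (Nat.card F - 1) := by
      rw [IsCyclic.card_powMonoidHom_ker, Nat.card_units, Nat.gcd_comm]

theorem card_pow_eq_le_card_pow_eq_one (b : F) :
    Nat.card {x : F // x ^ d = b} ≤ Nat.card {x : F // x ^ d = 1} := by
  by_cases h : ∃ x₀ : F, x₀ ^ d = b ∧ x₀ ≠ 0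
  · obtain ⟨x₀, rfl, hx₀⟩ := h
    have hb : x₀ ^ d ≠ 0 := pow_ne_zero d hx₀
    exact Nat.card_le_card_of_injective
      (fun x => ⟨x.1 / x₀, by rw [div_pow, x.2, div_self hb]⟩)
      fun x y hxy => Subtype.ext ((div_left_inj' hx₀).mp (congrArg Subtype.val hxy))
  · push Not at h
    have : Subsingleton {x : F // x ^ d = b} :=
      ⟨fun x y => Subtype.ext ((h x x.2).trans (h y y.2).symm)⟩
    have : Nonempty {x : F // x ^ d = 1} := ⟨⟨1, one_pow d⟩⟩
    exact Finite.card_le_one_iff_subsingleton.mpr ‹_› |>.trans Nat.card_pos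

theorem card_pow_eq_one_mul_card_ne_zero_pow_eq_le (hd : d ≠ 0) {a : F} (ha : a ≠ 0) (b : F) :
    Nat.card {ζ : F // ζ ^ d = 1} * Nat.card {x : F // x ≠ 0 ∧ x ^ d = a * x + b} ≤
      Nat.card Fˣ := by
  have hζ₀ : ∀ ζ : {ζ : F // ζ ^ d = 1}, ζ.1 ≠ 0 := fun ζ =>
    ne_zero_pow hd (by rw [ζ.2]; exact one_ne_zero)
  rw [← Nat.card_prod]
  refine Nat.card_le_card_of_injective
    (fun p => Units.mk0 (p.1.1 * p.2.1) (mul_ne_zero (hζ₀ p.1) p.2.2.1)) ?_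
  rintro ⟨ζ, x⟩ ⟨ζ', x'⟩ h
  replace h : ζ.1 * x.1 = ζ'.1 * x'.1 := congrArg Units.val h
  -- `ζ x` determines `x ^ d = (ζ x) ^ d`, hence `a x + b`, hence `x`.
  have hx : x = x' := by
    have hpow : x.1 ^ d = x'.1 ^ d := by
      simpa only [mul_pow, ζ.2, ζ'.2, one_mul] using congrArg (· ^ d) h
    rw [x.2.2, x'.2.2, add_left_inj] at hpow
    exact Subtype.ext (mul_left_cancel₀ ha hpow)
  subst hx
  exact Prod.ext (Subtype.ext (mul_right_cancel₀ x.2.1 h)) rfl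

end FiniteField

theorem stmt8 {F : Type*} [Field F] [Fintype F] (d : ℕ) (hd : 1 ≤ d)
    (m : ℕ) (hm : m = Nat.gcd d (Fintype.card F - 1))
    (hbig : Fintype.card F - 1 ≤ m * (m - 1)) :
    (∀ a b : F, Nat.card {x : F // x ^ d = a * x + b} ≤ m) ∧
    Nat.card {x : F // x ^ d = 1} = m := by
  have hd₀ : d ≠ 0 := by omega
  have hroots : Nat.card {x : F // x ^ d = 1} = m := by
    rw [card_pow_eq_one_eq_gcd hd₀, hm, Nat.card_eq_fintype_card (α := F)]
  refine ⟨fun a b => ?_, hroots⟩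
  rcases eq_or_ne a 0 with rfl | ha
  · simpa only [zero_mul, zero_add, hroots] using card_pow_eq_le_card_pow_eq_one (d := d) b
  have : Nonempty {x : F // x ^ d = 1} := ⟨⟨1, one_pow d⟩⟩
  have hm₀ : 0 < m := hroots ▸ Nat.card_pos
  have hmul := card_pow_eq_one_mul_card_ne_zero_pow_eq_le hd₀ ha b
  rw [hroots, Nat.card_units, Nat.card_eq_fintype_card (α := F)] at hmul
  have hnonzero : Nat.card {x : F // x ≠ 0 ∧ x ^ d = a * x + b} ≤ m - 1 :=
    Nat.le_of_mul_le_mul_left (hmul.trans hbig) hm₀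
  have := Nat.card_subtype_le_card_subtype_ne_add_one (fun x : F => x ^ d = a * x + b) 0
  omega
end

section
/- Let q be a prime power, let d ≥ 1 be an integer, and let m = gcd(d−1, q−1). If m(m+1) ≥ q−1, then the degree of the monomial x^d equals m+1; that is, for all a, b ∈ F_q the equation x^d = a·x + b has at most m+1 solutions x ∈ F_q, and the equation x^d = x has exactly m+1 solutions. -/
/-!
Write `d = n + 1` and `q = |F|`. For `x ≠ 0`, `x ^ d = a * x` means `x ^ n = a`, whose solutions
form a coset of the `gcd n (q - 1) = m` roots of `x ^ n = 1` in the cyclic group `Fˣ`; with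
`x = 0` this gives at most `m + 1` solutions when `b = 0`, and exactly `m + 1` when `a = 1`.
When `b ≠ 0`, two solutions `x`, `y` with `x ^ m = y ^ m` differ by a factor `u` with `u ^ d = u`,
which forces `u * b = b`; so `x ↦ x ^ m` is injective on the solutions, with image in the
`(q - 1) / m` roots of `z ^ ((q - 1) / m) = 1`, and `(q - 1) / m ≤ m + 1` is the hypothesis
`q - 1 ≤ m (m + 1)`.
-/

section Field

variable {F : Type*} [Field F]

theorem ne_zero_of_pow_succ_eq_mul_add {n : ℕ} {a b x : F} (hb : b ≠ 0)
    (hx : x ^ (n + 1) = a * x + b) : x ≠ 0 := by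
  rintro rfl
  simp [hb.symm] at hx

theorem eq_of_pow_eq_of_pow_succ_eq_mul_add {n m : ℕ} (hmn : m ∣ n) {a b x y : F} (hb : b ≠ 0)
    (hx : x ^ (n + 1) = a * x + b) (hy : y ^ (n + 1) = a * y + b) (hxy : x ^ m = y ^ m) :
    x = y := by
  have hx0 : x ≠ 0 := ne_zero_of_pow_succ_eq_mul_add hb hx
  set u := y / x
  have hu : u ^ (n + 1) = u := by
    obtain ⟨k, rfl⟩ := hmn
    rw [pow_succ, pow_mul, div_pow, ← hxy, div_self (pow_ne_zero _ hx0), one_pow, one_mul]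
  have hyu : y = u * x := (div_mul_cancel₀ y hx0).symm
  have hub : u * b = b := by
    rw [hyu, mul_pow, hu, hx] at hy
    linear_combination hy
  rw [hyu, (mul_eq_right₀ hb).mp hub, one_mul]

end Field

section FiniteField

variable {F : Type*} [Field F] [Fintype F]

theorem card_nonzero_pow_eq_one (n : ℕ) :
    Nat.card {x : F // x ≠ 0 ∧ x ^ n = 1} = Nat.gcd n (Fintype.card F - 1) := by
  rw [← Nat.card_eq_fintype_card, ← Nat.card_units, Nat.gcd_comm,
    ← IsCyclic.card_powMonoidHom_ker]
  exact Nat.card_congr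
    { toFun := fun x => ⟨Units.mk0 x x.2.1, MonoidHom.mem_ker.2 (Units.ext x.2.2)⟩
      invFun := fun u => ⟨u.1, u.1.ne_zero, congrArg Units.val (MonoidHom.mem_ker.1 u.2)⟩
      left_inv := fun _ => rfl
      right_inv := fun _ => Subtype.ext (Units.ext rfl) }

theorem card_nonzero_pow_eq_le (n : ℕ) (a : F) :
    Nat.card {x : F // x ≠ 0 ∧ x ^ n = a} ≤ Nat.gcd n (Fintype.card F - 1) := by
  rw [← card_nonzero_pow_eq_one]
  rcases isEmpty_or_nonempty {x : F // x ≠ 0 ∧ x ^ n = a} with _ | ⟨x₀, hx₀, rfl⟩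
  · simp
  · refine Nat.card_le_card_of_injective
      (fun x => ⟨x / x₀, div_ne_zero x.2.1 hx₀, by
        rw [div_pow, x.2.2, div_self (pow_ne_zero _ hx₀)]⟩) fun x y hxy => ?_
    exact Subtype.ext ((div_left_inj' hx₀).mp (congrArg Subtype.val hxy))

theorem card_pow_succ_eq_mul (n : ℕ) (a : F) :
    Nat.card {x : F // x ^ (n + 1) = a * x} = Nat.card {x : F // x ≠ 0 ∧ x ^ n = a} + 1 := by
  have hset : {x : F | x ^ (n + 1) = a * x} = insert 0 {x : F | x ≠ 0 ∧ x ^ n = a} := by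
    ext x
    rcases eq_or_ne x 0 with rfl | hx
    · simp
    · simp [hx, pow_succ]
  rw [← Set.coe_ofPred, Nat.card_coe_set_eq, hset, Set.ncard_insert_of_notMem (by simp),
    ← Nat.card_coe_set_eq, Set.coe_ofPred]

theorem card_pow_succ_eq_mul_add_le {n m : ℕ} (hmn : m ∣ n) (hmq : m ∣ Fintype.card F - 1)
    (a : F) {b : F} (hb : b ≠ 0) :
    Nat.card {x : F // x ^ (n + 1) = a * x + b} ≤ (Fintype.card F - 1) / m := by
  have hx0 (x : {x : F // x ^ (n + 1) = a * x + b}) : (x : F) ≠ 0 :=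
    ne_zero_of_pow_succ_eq_mul_add hb x.2
  calc Nat.card {x : F // x ^ (n + 1) = a * x + b}
      ≤ Nat.card {z : F // z ≠ 0 ∧ z ^ ((Fintype.card F - 1) / m) = 1} :=
        Nat.card_le_card_of_injective
          (fun x => ⟨x ^ m, pow_ne_zero _ (hx0 x), by
            rw [← pow_mul, Nat.mul_div_cancel' hmq, FiniteField.pow_card_sub_one_eq_one _ (hx0 x)]⟩)
          fun x y hxy => Subtype.ext
            (eq_of_pow_eq_of_pow_succ_eq_mul_add hmn hb x.2 y.2 (congrArg Subtype.val hxy))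
    _ = (Fintype.card F - 1) / m := by
        rw [card_nonzero_pow_eq_one, Nat.gcd_eq_left (Nat.div_dvd_of_dvd hmq)]

end FiniteField

theorem stmt9 {F : Type*} [Field F] [Fintype F] (d : ℕ) (hd : 1 ≤ d)
    (m : ℕ) (hm : m = Nat.gcd (d - 1) (Fintype.card F - 1))
    (hbig : Fintype.card F - 1 ≤ m * (m + 1)) :
    (∀ a b : F, Nat.card {x : F // x ^ d = a * x + b} ≤ m + 1) ∧
    Nat.card {x : F // x ^ d = x} = m + 1 := by
  obtain ⟨n, rfl⟩ := Nat.exists_eq_add_of_le' hd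
  rw [Nat.add_sub_cancel] at hm
  subst hm
  refine ⟨fun a b => ?_, ?_⟩
  · rcases eq_or_ne b 0 with rfl | hb
    · simp_rw [add_zero]
      rw [card_pow_succ_eq_mul]
      exact Nat.add_le_add_right (card_nonzero_pow_eq_le n a) 1
    · exact (card_pow_succ_eq_mul_add_le (Nat.gcd_dvd_left _ _) (Nat.gcd_dvd_right _ _) a hb).trans
        (Nat.div_le_of_le_mul hbig)
  · simpa only [one_mul, card_nonzero_pow_eq_one] using card_pow_succ_eq_mul n (1 : F)
end

section
/- Let q be a prime power. (i) If q ≥ 3, then the degree of the monomial x^{q−1} equals q−1. Now let e be a divisor of q−1 with e < q−1. (ii) If e ≥ 2, then the degree of x^e equals e. (iii) If e ≥ 1, then the degree of x^{e+1} equals e+1. (iv) If e ≥ 2, then the degree of x^{q−e} equals e+1. (In each case, 'the degree of x^n equals v' means: for all a, b ∈ F_q the equation x^n = a·x + b has at most v solutions x ∈ F_q, and some choice of (a,b) attains exactly v solutions.) -/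
/-!
Upper bounds: `x ^ n - a x - b` is a nonzero polynomial of degree `n`, so it has at most `n`
roots. For `x ^ (q - e)` with `2 ≤ e`, multiplying by `x ^ (e - 1)` and using `x ^ (q - 1) = 1`
sends every nonzero solution to a root of `a X ^ e + b X ^ (e - 1) - 1`, a nonzero polynomial of
degree at most `e`; together with `x = 0` this gives at most `e + 1` solutions.

Lower bounds: since `Fˣ` is cyclic of order `q - 1`, the equation `x ^ d = 1` has exactly
`gcd (q - 1) d` solutions. The line `y = 1` therefore meets `x ^ e` in `e` points when
`e ∣ q - 1`, and the line `y = x` meets `x ^ (d + 1)` in `gcd (q - 1) d + 1` points, which is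
`e + 1` both for `d = e` and for `d = q - 1 - e`.
-/

/-- "The degree of the monomial `x^n` equals `v`": every line `y = a*x + b` meets the graph
of `x ↦ x^n` in at most `v` points, and some line meets it in exactly `v` points. -/
def MonomialDegreeIs (F : Type*) [Field F] (n v : ℕ) : Prop :=
  (∀ a b : F, Nat.card {x : F // x ^ n = a * x + b} ≤ v) ∧
  (∃ a b : F, Nat.card {x : F // x ^ n = a * x + b} = v)

open Polynomial

theorem Polynomial.ncard_le_natDegree_of_forall_eval_eq_zero {R : Type*} [CommRing R] [IsDomain R]
    {p : R[X]} (hp : p ≠ 0) {S : Set R} (hS : ∀ x ∈ S, p.eval x = 0) :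
    S.ncard ≤ p.natDegree := by
  classical
  have hsub : S ⊆ ↑p.roots.toFinset := fun x hx => by
    simpa [mem_roots', hp] using hS x hx
  calc S.ncard ≤ (↑p.roots.toFinset : Set R).ncard := Set.ncard_le_ncard hsub (Set.toFinite _)
    _ = p.roots.toFinset.card := Set.ncard_coe_finset _
    _ ≤ Multiset.card p.roots := Multiset.toFinset_card_le _
    _ ≤ p.natDegree := p.card_roots'

theorem card_pow_eq_linear_le {R : Type*} [CommRing R] [IsDomain R] {n : ℕ} (hn : 2 ≤ n)
    (a b : R) : Nat.card {x : R // x ^ n = a * x + b} ≤ n := by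
  have hlin : (C a * X + C b : R[X]).natDegree < n :=
    (natDegree_linear_le).trans_lt (by omega)
  have hdeg : (X ^ n - (C a * X + C b) : R[X]).natDegree = n := by
    rw [natDegree_sub_eq_left_of_natDegree_lt (by rwa [natDegree_X_pow]), natDegree_X_pow]
  have hp : (X ^ n - (C a * X + C b) : R[X]) ≠ 0 := ne_zero_of_natDegree_gt (n := 0) (by omega)
  exact (Polynomial.ncard_le_natDegree_of_forall_eval_eq_zero hp
    (S := {x : R | x ^ n = a * x + b}) fun x hx => by simp [hx.out]).trans_eq hdeg

theorem card_pow_succ_eq_self {M : Type*} [MonoidWithZero M] [IsRightCancelMulZero M]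
    [Nontrivial M] [Finite M] {d : ℕ} (hd : d ≠ 0) :
    Nat.card {x : M // x ^ (d + 1) = x} = Nat.card {x : M // x ^ d = 1} + 1 := by
  have hset : {x : M | x ^ (d + 1) = x} = insert 0 {x : M | x ^ d = 1} := by
    ext x
    calc x ^ (d + 1) = x ↔ x ^ d * x = 1 * x := by rw [pow_succ, one_mul]
      _ ↔ x = 0 ∨ x ^ d = 1 := by rw [mul_eq_mul_right_iff, or_comm]
  have hzero : (0 : M) ∉ {x : M | x ^ d = 1} := by simp [zero_pow hd]
  exact (congrArg Set.ncard hset).trans (Set.ncard_insert_of_notMem hzero (Set.toFinite _))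

section FiniteField

variable {F : Type*} [Field F] [Fintype F]

theorem FiniteField.card_pow_eq_one {d : ℕ} (hd : d ≠ 0) :
    Nat.card {x : F // x ^ d = 1} = (Fintype.card F - 1).gcd d := by
  have : NeZero d := ⟨hd⟩
  have hroots : rootsOfUnity d F ≃ {x : F // x ^ d = 1} :=
    (rootsOfUnityEquivNthRoots F d).trans
      (Equiv.subtypeEquivRight fun _ => mem_nthRoots (Nat.pos_of_ne_zero hd))
  rw [← Nat.card_congr hroots, rootsOfUnity_eq_ker, IsCyclic.card_powMonoidHom_ker,
    Nat.card_units, Nat.card_eq_fintype_card]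

theorem FiniteField.card_pow_card_sub_eq_linear_le {e : ℕ} (he : 2 ≤ e)
    (heq : e ≤ Fintype.card F) (a b : F) :
    Nat.card {x : F // x ^ (Fintype.card F - e) = a * x + b} ≤ e + 1 := by
  obtain ⟨k, rfl⟩ : ∃ k, e = k + 1 := ⟨e - 1, by omega⟩
  set q := Fintype.card F
  set p : F[X] := C a * X ^ (k + 1) + C b * X ^ k - 1
  have hp : p ≠ 0 := fun h => by
    simpa [p, zero_pow (show k ≠ 0 by omega)] using congrArg (eval 0) h
  have hdeg : p.natDegree ≤ k + 1 := by simp only [p]; compute_degree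
  have hroot : ∀ x : F, x ≠ 0 → x ^ (q - (k + 1)) = a * x + b → p.eval x = 0 := by
    intro x hx h
    have hmul : (a * x + b) * x ^ k = 1 := by
      rw [← h, ← pow_add, show q - (k + 1) + k = q - 1 by omega,
        FiniteField.pow_card_sub_one_eq_one x hx]
    simp only [p, eval_sub, eval_add, eval_mul, eval_pow, eval_C, eval_X, eval_one]
    linear_combination hmul
  have hsub : {x : F | x ^ (q - (k + 1)) = a * x + b} ⊆ insert 0 {x : F | p.eval x = 0} := by
    intro x hx
    rcases eq_or_ne x 0 with rfl | hx0
    · exact Set.mem_insert _ _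
    · exact Or.inr (hroot x hx0 hx)
  calc Nat.card {x : F // x ^ (q - (k + 1)) = a * x + b}
      ≤ (insert (0 : F) {x : F | p.eval x = 0}).ncard := Set.ncard_le_ncard hsub (Set.toFinite _)
    _ ≤ {x : F | p.eval x = 0}.ncard + 1 := Set.ncard_insert_le _ _
    _ ≤ k + 1 + 1 := by
      grw [Polynomial.ncard_le_natDegree_of_forall_eval_eq_zero hp (S := {x | p.eval x = 0})
        fun x hx => hx, hdeg]

end FiniteField

theorem stmt11 (F : Type*) [Field F] [Fintype F] :
    (3 ≤ Fintype.card F →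
      MonomialDegreeIs F (Fintype.card F - 1) (Fintype.card F - 1)) ∧
    (∀ e : ℕ, e ∣ Fintype.card F - 1 → e < Fintype.card F - 1 →
      (2 ≤ e → MonomialDegreeIs F e e) ∧
      (1 ≤ e → MonomialDegreeIs F (e + 1) (e + 1)) ∧
      (2 ≤ e → MonomialDegreeIs F (Fintype.card F - e) (e + 1))) := by
  set q := Fintype.card F
  have line_one : ∀ n, n ≠ 0 → Nat.card {x : F // x ^ n = 0 * x + 1} = (q - 1).gcd n := by
    intro n hn
    simpa only [zero_mul, zero_add] using FiniteField.card_pow_eq_one hn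
  have line_diag :
      ∀ d, d ≠ 0 → Nat.card {x : F // x ^ (d + 1) = 1 * x + 0} = (q - 1).gcd d + 1 := by
    intro d hd
    simpa only [one_mul, add_zero, FiniteField.card_pow_eq_one hd] using
      card_pow_succ_eq_self (M := F) hd
  refine ⟨fun hq3 => ⟨fun a b => card_pow_eq_linear_le (by omega) a b, 0, 1, ?_⟩,
    fun e hdvd hlt => ⟨fun he => ⟨fun a b => card_pow_eq_linear_le he a b, 0, 1, ?_⟩,
      fun he => ⟨fun a b => card_pow_eq_linear_le (by omega) a b, 1, 0, ?_⟩,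
      fun he => ⟨FiniteField.card_pow_card_sub_eq_linear_le he (by omega), 1, 0, ?_⟩⟩⟩
  · rw [line_one _ (by omega), Nat.gcd_self]
  · rw [line_one _ (by omega), Nat.gcd_eq_right hdvd]
  · rw [line_diag _ (by omega), Nat.gcd_eq_right hdvd]
  · rw [show q - e = (q - 1 - e) + 1 by omega, line_diag _ (by omega),
      Nat.gcd_self_sub_right hlt.le, Nat.gcd_eq_right hdvd]
end

section
/- Let q = 2^s with s > 1 and let F_q be the finite field with q elements. Then the degree of the monomial x^{q−2} equals 2: for all a, b ∈ F_q the equation x^{q−2} = a·x + b has at most 2 solutions x ∈ F_q, and some choice of (a,b) gives exactly 2 solutions (for instance x^{q−2} = x has exactly the two solutions x = 0 and x = 1). -/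
/-!
Since `q > 2`, Fermat's little theorem gives `x ^ (q - 2) = x⁻¹` on all of `F_q`, zero included,
so the question is about the equation `x⁻¹ = a x + b`. For `b ≠ 0` its solutions are nonzero and
are the roots of the quadratic `a x² + b x - 1`. For `b = 0` they are `0` and the solutions of
`a x² = 1`, of which there is at most one because squaring is injective in characteristic 2.
The equation `x⁻¹ = x` has exactly the solutions `0` and `1 = -1`.
-/

open Polynomial

theorem FiniteField.pow_card_sub_two_eq_inv {K : Type*} [GroupWithZero K] [Fintype K]
    (hK : 2 < Fintype.card K) (x : K) : x ^ (Fintype.card K - 2) = x⁻¹ := by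
  rcases eq_or_ne x 0 with rfl | hx
  · rw [zero_pow (by omega), inv_zero]
  · refine eq_inv_of_mul_eq_one_left ?_
    rw [← pow_succ, show Fintype.card K - 2 + 1 = Fintype.card K - 1 by omega]
    exact FiniteField.pow_card_sub_one_eq_one x hx

theorem Nat.card_subtype_le_of_subset_finset {α : Type*} {p : α → Prop} {s : Finset α}
    (h : ∀ x, p x → x ∈ s) : Nat.card {x // p x} ≤ s.card := by
  rw [← Set.ncard_coe_finset, ← Nat.card_coe_set_eq]
  exact Set.ncard_le_ncard h

theorem card_inv_eq_mul_add_le_two_of_ne_zero {K : Type*} [Field K] (a : K) {b : K}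
    (hb : b ≠ 0) : Nat.card {x : K // x⁻¹ = a * x + b} ≤ 2 := by
  classical
  set p : K[X] := C a * X ^ 2 + C b * X - 1
  have hp : p ≠ 0 := fun h => by simpa [p] using congrArg (eval 0) h
  have hroot : ∀ x : K, x⁻¹ = a * x + b → x ∈ p.roots.toFinset := by
    intro x hx
    have hx0 : x ≠ 0 := by
      rintro rfl
      exact hb (by simpa using hx.symm)
    rw [Multiset.mem_toFinset, mem_roots hp]
    simp only [p, IsRoot, eval_sub, eval_add, eval_mul, eval_C, eval_pow, eval_X, eval_one]
    linear_combination (-x) * hx + mul_inv_cancel₀ hx0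
  calc Nat.card {x : K // x⁻¹ = a * x + b}
      ≤ p.roots.toFinset.card := Nat.card_subtype_le_of_subset_finset hroot
    _ ≤ Multiset.card p.roots := Multiset.toFinset_card_le _
    _ ≤ p.natDegree := card_roots' p
    _ ≤ 2 := by simp only [p]; compute_degree

namespace CharTwo

variable {K : Type*} [Field K] [CharP K 2]

theorem card_inv_eq_mul_le_two (a : K) : Nat.card {x : K // x⁻¹ = a * x} ≤ 2 := by
  have hsq : {x : K | a * x ^ 2 = 1}.Subsingleton := by
    intro x hx y hy
    have ha : a ≠ 0 := left_ne_zero_of_mul_eq_one hx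
    exact sq_injective (mul_left_cancel₀ ha (hx.trans hy.symm))
  have hsub : {x : K | x⁻¹ = a * x} ⊆ insert 0 {x : K | a * x ^ 2 = 1} := by
    intro x hx
    rcases eq_or_ne x 0 with rfl | hx0
    · exact Set.mem_insert _ _
    · refine Set.mem_insert_of_mem _ (show a * x ^ 2 = 1 from ?_)
      have hx : x⁻¹ = a * x := hx
      linear_combination x * hx.symm + mul_inv_cancel₀ hx0
  calc Nat.card {x : K // x⁻¹ = a * x}
      ≤ (insert 0 {x : K | a * x ^ 2 = 1}).ncard :=
        Set.ncard_le_ncard hsub (hsq.finite.insert 0)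
    _ ≤ {x : K | a * x ^ 2 = 1}.ncard + 1 := Set.ncard_insert_le _ _
    _ ≤ 2 := by grw [(Set.ncard_le_one_iff hsq.finite).mpr (hsq · ·)]

theorem card_inv_eq_mul_add_le_two (a b : K) : Nat.card {x : K // x⁻¹ = a * x + b} ≤ 2 := by
  rcases eq_or_ne b 0 with rfl | hb
  · simpa using card_inv_eq_mul_le_two a
  · exact card_inv_eq_mul_add_le_two_of_ne_zero a hb

theorem inv_eq_self_iff {x : K} : x⁻¹ = x ↔ x = 0 ∨ x = 1 := by
  rw [inv_eq_self₀, CharTwo.neg_eq]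
  tauto

end CharTwo

theorem stmt12 (s : ℕ) (hs : 1 < s)
    {F : Type*} [Field F] [Fintype F] (hF : Fintype.card F = 2 ^ s) :
    (∀ a b : F, Nat.card {x : F // x ^ (Fintype.card F - 2) = a * x + b} ≤ 2) ∧
    (∃ a b : F, Nat.card {x : F // x ^ (Fintype.card F - 2) = a * x + b} = 2) ∧
    {x : F | x ^ (Fintype.card F - 2) = x} = {0, 1} := by
  have : CharP F 2 := charP_of_card_eq_prime_pow hF
  have hq : 2 < Fintype.card F :=
    hF ▸ (pow_one 2).symm.trans_lt (Nat.pow_lt_pow_right (by norm_num) hs)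
  simp_rw [FiniteField.pow_card_sub_two_eq_inv hq]
  have hfix : {x : F | x⁻¹ = x} = {0, 1} := Set.ext fun _ => CharTwo.inv_eq_self_iff
  refine ⟨CharTwo.card_inv_eq_mul_add_le_two, ⟨1, 0, ?_⟩, hfix⟩
  simp_rw [one_mul, add_zero]
  rw [← Set.ncard_pair (zero_ne_one' F), ← hfix]
  rfl
end

section
/- Let p be a prime, let q = p^2, and let F_q be the finite field with q elements. Then the degree of the monomial x^{q−p} equals p: for all a, b ∈ F_q the equation x^{q−p} = a·x + b has at most p solutions x ∈ F_q, and the equation x^{q−p} = −x − 1 has exactly p solutions x ∈ F_q. -/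
/-! Since `x ^ (q - 1) = 1` for `x ≠ 0`, the equation `x ^ (q - p) = a * x + b` becomes
`(a * x + b) * x ^ (p - 1) = 1` away from `0`, a polynomial equation of degree at most `p`.
When `b = 0`, the point `x = 0` is an extra solution, but then the equation is `a * x ^ p = 1`,
which has at most one solution because the Frobenius is injective.

For `a = b = -1`, multiplying by `x` gives `x ^ (p + 1) + x ^ p + x = 0`, which in characteristic
`p` reads `(x + 1) ^ (p + 1) = 1`. So the solutions are the `ζ - 1` for the `(p + 1)`-th roots of
unity `ζ ≠ 1`, and all `p + 1` of these lie in `F` because `p + 1 ∣ q - 1`. -/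

open Polynomial

theorem ncard_setOf_mul_add_mul_pow_eq_one_le {K : Type*} [Field K] (a b : K) {n : ℕ}
    (hn : n ≠ 0) : {x : K | (a * x + b) * x ^ n = 1}.ncard ≤ n + 1 := by
  set P : K[X] := (C a * X + C b) * X ^ n - 1
  have hP : P ≠ 0 := fun h => by simpa [P, hn] using congrArg (eval 0) h
  have hdeg : P.natDegree ≤ n + 1 := by simp only [P]; compute_degree; omega
  calc {x : K | (a * x + b) * x ^ n = 1}.ncard ≤ (P.rootSet K).ncard :=
        Set.ncard_le_ncard (fun x hx => by simpa [mem_rootSet, hP, P, sub_eq_zero] using hx)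
          (P.rootSet_finite K)
    _ ≤ n + 1 := (P.ncard_rootSet_le K).trans hdeg

theorem ncard_setOf_mul_pow_char_eq_one_le_one {K : Type*} [Field K] (p : ℕ) [Fact p.Prime]
    [CharP K p] (a : K) : {x : K | a * x ^ p = 1}.ncard ≤ 1 := by
  have hsub : {x : K | a * x ^ p = 1}.Subsingleton := fun u hu v hv =>
    frobenius_inj K p (mul_left_cancel₀ (left_ne_zero_of_mul_eq_one hu) (hu.trans hv.symm))
  exact (Set.ncard_le_one hsub.finite).mpr hsub

theorem neg_sub_one_mul_pow_sub_one_eq_one_iff {K : Type*} [Field K] (p : ℕ) [Fact p.Prime]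
    [CharP K p] {x : K} (hx : x ≠ 0) : (-x - 1) * x ^ (p - 1) = 1 ↔ (x + 1) ^ (p + 1) = 1 := by
  have hexp : (x + 1) ^ (p + 1) = (x ^ p + 1) * (x + 1) := by
    rw [pow_succ, add_pow_char, one_pow]
  rw [hexp, ← mul_pow_sub_one (Fact.out : p.Prime).ne_zero, ← mul_right_inj' hx]
  constructor <;> intro h <;> linear_combination -h

theorem IsPrimitiveRoot.ncard_setOf_ne_zero_add_one_pow_eq_one {R : Type*} [CommRing R]
    [IsDomain R] {ζ : R} {n : ℕ} (hζ : IsPrimitiveRoot ζ n) (hn : 0 < n) :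
    {x : R | x ≠ 0 ∧ (x + 1) ^ n = 1}.ncard = n - 1 := by
  classical
  have hset : {x : R | x ≠ 0 ∧ (x + 1) ^ n = 1} =
      (fun y => y - 1) '' ↑(nthRootsFinset n (1 : R)) \ {0} := by
    ext x
    simp [Polynomial.mem_nthRootsFinset hn, sub_eq_iff_eq_add, and_comm]
  rw [hset, Set.ncard_sdiff_singleton_of_mem, Set.ncard_image_of_injective _ (sub_left_injective),
    Set.ncard_coe_finset, hζ.card_nthRootsFinset]
  exact ⟨1, (Polynomial.mem_nthRootsFinset hn 1).mpr (one_pow n), sub_self 1⟩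

namespace FiniteField

variable {F : Type*} [Field F] [Fintype F]

theorem pow_eq_iff_mul_pow_eq_one {x : F} (hx : x ≠ 0) {m k : ℕ}
    (hmk : m + k = Fintype.card F - 1) (c : F) : x ^ m = c ↔ c * x ^ k = 1 := by
  have h : x ^ m * x ^ k = 1 := by rw [← pow_add, hmk, pow_card_sub_one_eq_one x hx]
  exact ⟨fun hc => hc ▸ h, fun hc => mul_right_cancel₀ (pow_ne_zero k hx) (h.trans hc.symm)⟩

theorem exists_isPrimitiveRoot_of_dvd_card_sub_one {n : ℕ} (hn : n ∣ Fintype.card F - 1) :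
    ∃ ζ : F, IsPrimitiveRoot ζ n := by
  classical
  have hn' : n ∣ Fintype.card Fˣ := by rwa [Fintype.card_units]
  have hpos : 0 < n := Nat.pos_of_dvd_of_pos hn (Nat.sub_pos_of_lt Fintype.one_lt_card)
  obtain ⟨ζ, hζ⟩ := Finset.card_pos.mp
    ((IsCyclic.card_orderOf_eq_totient hn').symm ▸ Nat.totient_pos.mpr hpos)
  exact ⟨ζ, IsPrimitiveRoot.coe_units_iff.mpr ((Finset.mem_filter.mp hζ).2 ▸ .orderOf ζ)⟩

variable {p : ℕ} [Fact p.Prime] [CharP F p]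

theorem ncard_setOf_pow_card_sub_eq_mul_add_le (hpq : p < Fintype.card F) (a b : F) :
    {x : F | x ^ (Fintype.card F - p) = a * x + b}.ncard ≤ p := by
  have hp := (Fact.out : p.Prime).two_le
  have hmk : Fintype.card F - p + (p - 1) = Fintype.card F - 1 := by omega
  rcases eq_or_ne b 0 with rfl | hb
  · have hsub : {x : F | x ^ (Fintype.card F - p) = a * x + 0} ⊆
        {0} ∪ {x | a * x ^ p = 1} := by
      intro x hx
      rcases eq_or_ne x 0 with rfl | hx0
      · exact Or.inl rfl
      · right
        have h := (pow_eq_iff_mul_pow_eq_one hx0 hmk _).mp hx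
        rwa [add_zero, mul_assoc, mul_pow_sub_one (by omega)] at h
    calc _ ≤ ({0} ∪ {x | a * x ^ p = 1}).ncard := Set.ncard_le_ncard hsub
      _ ≤ 1 + 1 := (Set.ncard_union_le _ _).trans
          (add_le_add (Set.ncard_singleton 0).le (ncard_setOf_mul_pow_char_eq_one_le_one p a))
      _ ≤ p := hp
  · have hsub : {x : F | x ^ (Fintype.card F - p) = a * x + b} ⊆
        {x | (a * x + b) * x ^ (p - 1) = 1} := by
      intro x hx
      have hx0 : x ≠ 0 := by
        rintro rfl
        exact hb (by simpa [zero_pow (show Fintype.card F - p ≠ 0 by omega), eq_comm] using hx)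
      exact (pow_eq_iff_mul_pow_eq_one hx0 hmk _).mp hx
    calc _ ≤ p - 1 + 1 :=
          (Set.ncard_le_ncard hsub).trans (ncard_setOf_mul_add_mul_pow_eq_one_le a b (by omega))
      _ = p := by omega

theorem ncard_setOf_pow_card_sub_eq_neg_sub_one (hdvd : p + 1 ∣ Fintype.card F - 1) :
    {x : F | x ^ (Fintype.card F - p) = -x - 1}.ncard = p := by
  have hpq : p + 1 ≤ Fintype.card F - 1 :=
    Nat.le_of_dvd (Nat.sub_pos_of_lt Fintype.one_lt_card) hdvd
  have hmk : Fintype.card F - p + (p - 1) = Fintype.card F - 1 := by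
    have := (Fact.out : p.Prime).pos
    omega
  obtain ⟨ζ, hζ⟩ := exists_isPrimitiveRoot_of_dvd_card_sub_one hdvd
  have hset : {x : F | x ^ (Fintype.card F - p) = -x - 1} =
      {x | x ≠ 0 ∧ (x + 1) ^ (p + 1) = 1} := by
    ext x
    rcases eq_or_ne x 0 with rfl | hx
    · simp [zero_pow (show Fintype.card F - p ≠ 0 by omega)]
    · simp only [Set.mem_ofPred_eq, pow_eq_iff_mul_pow_eq_one hx hmk,
        neg_sub_one_mul_pow_sub_one_eq_one_iff p hx, ne_eq, hx, not_false_eq_true, true_and]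
  rw [hset, hζ.ncard_setOf_ne_zero_add_one_pow_eq_one p.succ_pos, Nat.add_sub_cancel]

end FiniteField

open FiniteField in
theorem stmt14 (p : ℕ) (hp : p.Prime)
    {F : Type*} [Field F] [Fintype F] (hF : Fintype.card F = p ^ 2) :
    (∀ a b : F, Nat.card {x : F // x ^ (Fintype.card F - p) = a * x + b} ≤ p) ∧
    Nat.card {x : F // x ^ (Fintype.card F - p) = -x - 1} = p := by
  have : Fact p.Prime := ⟨hp⟩
  have : CharP F p := charP_of_card_eq_prime_pow hF
  have hpq : p < Fintype.card F := hF ▸ lt_self_pow₀ hp.one_lt one_lt_two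
  have hdvd : p + 1 ∣ Fintype.card F - 1 := ⟨p - 1, by rw [hF, sq, mul_self_tsub_one]⟩
  exact ⟨fun a b =>
      (Nat.card_coe_set_eq _).trans_le (ncard_setOf_pow_card_sub_eq_mul_add_le hpq a b),
    (Nat.card_coe_set_eq _).trans (ncard_setOf_pow_card_sub_eq_neg_sub_one hdvd)⟩
end

section
/- Let q be an odd prime power and let f(x) = x^{(q−1)/2} on F_q. Let v_3(f) be the number of pairs (a,b) ∈ F_q × F_q such that the equation x^{(q−1)/2} = a·x + b has exactly 3 solutions x ∈ F_q. Then: (1) if q ≡ 1 (mod 4), then v_3(f) = 0; (2) if q ≡ 3 (mod 4) and q ≠ 7, then v_3(f) = (q−1)/2; and if q = 7, then v_3(f) = (q−1)/2 + 2 = 5. -/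
/-!
Write `χ x = x ^ ((q - 1) / 2)`. It takes the value `0` only at `0`, and each of the values `1`
and `-1` exactly `(q - 1) / 2` times (multiplication by a nonsquare swaps the two fibres).

For `a ≠ 0`, a solution `x` of `χ x = a * x + b` is recovered from `c = χ x ∈ {0, 1, -1}` as
`x = (c - b) / a`, so there are three solutions iff `χ ((c - b) / a) = c` for all three `c`.
The case `c = 0` forces `b = 0`, then `c = 1` says `χ a = 1` and `c = -1` says `χ (-1) = -1`,
i.e. `q ≡ 3 (mod 4)`: this gives `(q - 1) / 2` lines through the origin.
For `a = 0` the equation `χ x = b` has three solutions iff `b = ±1` and `(q - 1) / 2 = 3`,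
which adds the two horizontal lines when `q = 7`.
-/

/-- `interDist f i` is the number of pairs `(a,b) ∈ F × F` such that the equation
`f x = a * x + b` has exactly `i` solutions `x ∈ F`. -/
noncomputable def interDist {F : Type*} [Field F] (f : F → F) (i : ℕ) : ℕ :=
  Nat.card {ab : F × F // Nat.card {x : F // f x = ab.1 * x + ab.2} = i}

open Finset

lemma card_filter_fst_and_snd {α β : Type*} [Fintype α] [Fintype β] (p : α → Prop)
    (q : β → Prop) [DecidablePred p] [DecidablePred q] :
    #{x : α × β | p x.1 ∧ q x.2} = #{a | p a} * #{b | q b} := by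
  rw [← univ_product_univ, filter_product, card_product]

section Field

variable {F : Type*} [Field F] [DecidableEq F]

lemma card_zero_one_neg_one (hF : ringChar F ≠ 2) : #({0, 1, -1} : Finset F) = 3 := by
  rw [card_insert_of_notMem (by simp), card_pair (Ring.neg_one_ne_one_of_char_ne_two hF).symm]

lemma card_filter_eq_affine_eq_card_iff [Fintype F] {f : F → F} {S : Finset F}
    (hS : ∀ x, f x ∈ S) {a : F} (ha : a ≠ 0) (b : F) :
    #{x | f x = a * x + b} = #S ↔ ∀ c ∈ S, f ((c - b) / a) = c := by
  have hinv (x : F) : (a * x + b - b) / a = x := by field_simp; ring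
  rw [← card_filter_eq_iff]
  refine Eq.congr_left (card_equiv ((Equiv.mulLeft₀ a ha).trans (Equiv.addRight b)) fun x => ?_)
  simp only [mem_filter, mem_univ, true_and, Equiv.trans_apply, Equiv.mulLeft₀_apply,
    Equiv.coe_addRight, hinv]
  exact ⟨fun h => ⟨h ▸ hS x, h⟩, fun h => h.2⟩

end Field

section FiniteField

variable {F : Type*} [Field F] [Fintype F]

lemma neg_one_pow_card_div_two_eq_neg_one_iff (hF : ringChar F ≠ 2) :
    (-1 : F) ^ (Fintype.card F / 2) = -1 ↔ Fintype.card F % 4 = 3 := by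
  have h0 : (-1 : F) ≠ 0 := neg_ne_zero.2 one_ne_zero
  have h1 := Ring.neg_one_ne_one_of_char_ne_two hF
  calc (-1 : F) ^ (Fintype.card F / 2) = -1 ↔ ¬(-1 : F) ^ (Fintype.card F / 2) = 1 := by
        rcases FiniteField.pow_dichotomy hF h0 with h | h <;> simp [h, h1, h1.symm]
    _ ↔ Fintype.card F % 4 = 3 := by
        rw [← FiniteField.isSquare_iff hF h0, FiniteField.isSquare_neg_one_iff, not_not]

variable [DecidableEq F]

lemma pow_card_div_two_mem (hF : ringChar F ≠ 2) (x : F) :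
    x ^ (Fintype.card F / 2) ∈ ({0, 1, -1} : Finset F) := by
  rcases eq_or_ne x 0 with rfl | hx
  · simp [Fintype.one_lt_card]
  · simpa [hx] using FiniteField.pow_dichotomy hF hx

lemma filter_pow_card_div_two_eq_zero :
    ({x | x ^ (Fintype.card F / 2) = 0} : Finset F) = {0} := by
  ext x
  simp [Fintype.one_lt_card]

lemma card_pow_card_div_two_eq_neg_one (hF : ringChar F ≠ 2) :
    #{x : F | x ^ (Fintype.card F / 2) = -1} = #{x : F | x ^ (Fintype.card F / 2) = 1} := by
  obtain ⟨u, hu⟩ := quadraticChar_exists_neg_one hF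
  have huk : u ^ (Fintype.card F / 2) = -1 := by
    rw [← quadraticChar_eq_pow_of_char_ne_two' hF, hu, Int.cast_neg, Int.cast_one]
  have hu0 : u ≠ 0 := by rintro rfl; simp at hu
  refine card_equiv (Equiv.mulLeft₀ u hu0) fun x => ?_
  simp [mul_pow, huk, neg_eq_iff_eq_neg]

lemma card_pow_card_div_two_eq_one (hF : ringChar F ≠ 2) :
    #{x : F | x ^ (Fintype.card F / 2) = 1} = Fintype.card F / 2 := by
  have hsum := card_eq_sum_card_fiberwise (s := univ) fun x _ => pow_card_div_two_mem hF x
  rw [sum_insert (by simp), sum_pair (Ring.neg_one_ne_one_of_char_ne_two hF).symm,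
    filter_pow_card_div_two_eq_zero, card_pow_card_div_two_eq_neg_one hF, card_singleton,
    card_univ] at hsum
  have := FiniteField.odd_card_of_char_ne_two hF
  omega

lemma card_pow_card_div_two_eq_three_iff (hF : ringChar F ≠ 2) (b : F) :
    #{x : F | x ^ (Fintype.card F / 2) = b} = 3 ↔ (b = 1 ∨ b = -1) ∧ Fintype.card F = 7 := by
  have hodd := FiniteField.odd_card_of_char_ne_two hF
  by_cases hb : b ∈ ({0, 1, -1} : Finset F)
  · simp only [mem_insert, mem_singleton] at hb
    rcases hb with rfl | rfl | rfl
    · rw [filter_pow_card_div_two_eq_zero]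
      simp
    · rw [card_pow_card_div_two_eq_one hF]
      simp only [true_or, true_and]
      omega
    · rw [card_pow_card_div_two_eq_neg_one hF, card_pow_card_div_two_eq_one hF]
      simp only [or_true, true_and]
      omega
  · have hempty : #{x : F | x ^ (Fintype.card F / 2) = b} = 0 :=
      card_filter_eq_zero_iff.2 fun x _ hx => hb (hx ▸ pow_card_div_two_mem hF x)
    simp only [mem_insert, mem_singleton, not_or] at hb
    simp [hempty, hb]

lemma card_pow_card_div_two_eq_affine_eq_three_iff_of_ne_zero (hF : ringChar F ≠ 2) {a : F}
    (ha : a ≠ 0) (b : F) :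
    #{x : F | x ^ (Fintype.card F / 2) = a * x + b} = 3 ↔
      a ^ (Fintype.card F / 2) = 1 ∧ b = 0 ∧ Fintype.card F % 4 = 3 := by
  have h := card_filter_eq_affine_eq_card_iff (pow_card_div_two_mem hF) ha b
  rw [card_zero_one_neg_one hF] at h
  simp only [h, mem_insert, mem_singleton, forall_eq_or_imp, forall_eq,
    ← neg_one_pow_card_div_two_eq_neg_one_iff hF]
  constructor
  · rintro ⟨h0, h1, hm1⟩
    have hb : b = 0 := by simpa [ha, Fintype.one_lt_card] using h0
    subst hb
    have ha1 : a ^ (Fintype.card F / 2) = 1 := by simpa [div_pow] using h1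
    exact ⟨ha1, rfl, by simpa [div_pow, ha1] using hm1⟩
  · rintro ⟨ha1, rfl, hm1⟩
    simp [div_pow, ha1, hm1, Fintype.one_lt_card]

lemma card_pow_card_div_two_eq_affine_eq_three_iff (hF : ringChar F ≠ 2) (a b : F) :
    #{x : F | x ^ (Fintype.card F / 2) = a * x + b} = 3 ↔
      (a ^ (Fintype.card F / 2) = 1 ∧ Fintype.card F % 4 = 3) ∧ b = 0 ∨
        (a = 0 ∧ Fintype.card F = 7) ∧ (b = 1 ∨ b = -1) := by
  rcases eq_or_ne a 0 with rfl | ha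
  · simp [card_pow_card_div_two_eq_three_iff hF, Fintype.one_lt_card, and_comm]
  · rw [card_pow_card_div_two_eq_affine_eq_three_iff_of_ne_zero hF ha]
    simp only [ha, false_and, or_false]
    tauto

lemma interDist_pow_card_div_two_three (hF : ringChar F ≠ 2) :
    interDist (fun x : F => x ^ (Fintype.card F / 2)) 3 =
      (if Fintype.card F % 4 = 3 then Fintype.card F / 2 else 0) +
        if Fintype.card F = 7 then 2 else 0 := by
  have h1 := Ring.neg_one_ne_one_of_char_ne_two hF
  simp only [interDist, Nat.card_eq_fintype_card, Fintype.card_subtype,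
    card_pow_card_div_two_eq_affine_eq_three_iff hF]
  rw [filter_or, card_union_of_disjoint,
    card_filter_fst_and_snd (fun a : F => a ^ (Fintype.card F / 2) = 1 ∧ Fintype.card F % 4 = 3)
      (· = 0),
    card_filter_fst_and_snd (fun a : F => a = 0 ∧ Fintype.card F = 7) (fun b => b = 1 ∨ b = -1)]
  · have hk := card_pow_card_div_two_eq_one hF
    by_cases h3 : Fintype.card F % 4 = 3 <;> by_cases h7 : Fintype.card F = 7 <;>
      simp_all [filter_or, filter_eq', card_pair h1.symm]
  · exact disjoint_filter.2 fun ab _ h h' => by rcases h'.2 with hb | hb <;> simp [hb] at h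

end FiniteField

theorem stmt16 {F : Type*} [Field F] [Fintype F] (hodd : Odd (Fintype.card F)) :
    (Fintype.card F % 4 = 1 →
      interDist (fun x : F => x ^ ((Fintype.card F - 1) / 2)) 3 = 0) ∧
    (Fintype.card F % 4 = 3 → Fintype.card F ≠ 7 →
      interDist (fun x : F => x ^ ((Fintype.card F - 1) / 2)) 3 = (Fintype.card F - 1) / 2) ∧
    (Fintype.card F = 7 →
      interDist (fun x : F => x ^ ((Fintype.card F - 1) / 2)) 3 = 5) := by
  classical
  have hodd' : Fintype.card F % 2 = 1 := Nat.odd_iff.1 hodd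
  have hF : ringChar F ≠ 2 := mt FiniteField.even_card_iff_char_two.1 (by omega)
  have hk : (Fintype.card F - 1) / 2 = Fintype.card F / 2 := by omega
  rw [hk, interDist_pow_card_div_two_three hF]
  refine ⟨fun h1 => ?_, fun h3 h7 => ?_, fun h7 => ?_⟩ <;> split_ifs <;> omega
end

section
/- Let q = p^s with p prime, let a ∈ F_q, and consider the cubic f(x) = x^3 + a·x^2 over F_q. Let v_0(f) be the number of pairs (c,d) ∈ F_q × F_q such that the equation x^3 + a·x^2 = c·x + d has no solution x ∈ F_q. Then: (i) if p ≠ 3, then v_0(f) = (q^2 − 1)/3; (ii) if p = 3 and a ≠ 0, then v_0(f) = q^2/3; (iii) if p = 3 and a = 0, then v_0(f) = q(q−1)/3. -/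
/-!
A line `y = c x + d` meets the graph of `x³ + a x²` in the roots of `x³ + a x² - c x - d`.
By Vieta, every ordered triple `w` with `w₁ + w₂ + w₃ = -a` is the triple of intersection points
(with multiplicity) of exactly one line, and the triples belonging to one line are the
permutations of each other. A line meeting the graph in `k` distinct points thus carries
`0, 0, 3, 6` non-constant triples for `k = 0, 1, 2, 3`, that is `3k - 3 + 3·[k = 0]`.
Summing over all `q²` lines, and using that every point of the graph lies on exactly `q` lines,
gives `3 v₀ = #{non-constant triples} = q² - #{r | 3r = -a}`.
-/

open Finset

namespace Cubic

section Triples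

variable {α : Type*}

def IsConstTriple (w : α × α × α) : Prop := w.1 = w.2.1 ∧ w.2.1 = w.2.2

instance [DecidableEq α] (w : α × α × α) : Decidable (IsConstTriple w) :=
  inferInstanceAs (Decidable (_ ∧ _))

variable [DecidableEq α]

def perms (w : α × α × α) : Finset (α × α × α) :=
  {(w.1, w.2.1, w.2.2), (w.1, w.2.2, w.2.1), (w.2.1, w.1, w.2.2), (w.2.1, w.2.2, w.1),
    (w.2.2, w.1, w.2.1), (w.2.2, w.2.1, w.1)}

theorem card_filter_perms_not_const_add_three (w : α × α × α) :
    #((perms w).filter fun v => ¬IsConstTriple v) + 3 = 3 * #{w.1, w.2.1, w.2.2} := by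
  obtain ⟨x, y, z⟩ := w
  by_cases hxy : x = y <;> by_cases hyz : y = z <;> by_cases hxz : x = z <;>
    subst_vars <;> simp_all [perms, IsConstTriple, filter_insert, filter_singleton, eq_comm]

end Triples

variable {R : Type*} [CommRing R]

theorem eq_and_eq_or_eq_and_eq_of_add_eq_of_mul_eq [NoZeroDivisors R] {s t s' t' : R}
    (hadd : s' + t' = s + t) (hmul : s' * t' = s * t) :
    (s' = s ∧ t' = t) ∨ (s' = t ∧ t' = s) := by
  have h : (s' - s) * (s' - t) = 0 := by linear_combination s' * hadd - hmul
  rcases mul_eq_zero.mp h with h | h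
  · exact Or.inl ⟨by linear_combination h, by linear_combination hadd - h⟩
  · exact Or.inr ⟨by linear_combination h, by linear_combination hadd - h⟩

/-- The line `y = c x + d` meeting the graph of `x³ + a x²` in `w`, where `a = -(w₁ + w₂ + w₃)`. -/
def vieta (w : R × R × R) : R × R :=
  (-(w.1 * w.2.1 + w.1 * w.2.2 + w.2.1 * w.2.2), w.1 * w.2.1 * w.2.2)

theorem sum_eq_and_vieta_eq_of_mem_perms [DecidableEq R] {v w : R × R × R} (h : v ∈ perms w) :
    v.1 + v.2.1 + v.2.2 = w.1 + w.2.1 + w.2.2 ∧ vieta v = vieta w := by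
  simp only [perms, mem_insert, mem_singleton] at h
  rcases h with rfl | rfl | rfl | rfl | rfl | rfl <;> refine ⟨by ring, ?_⟩ <;>
    simp only [vieta, Prod.mk.injEq] <;> constructor <;> ring

section Fintype

variable [Fintype R] [DecidableEq R]

def cubicRoots (a c d : R) : Finset R := univ.filter fun x => x ^ 3 + a * x ^ 2 = c * x + d

def sumTriples (a : R) : Finset (R × R × R) := univ.filter fun w => w.1 + w.2.1 + w.2.2 = -a

def rootTriples (a c d : R) : Finset (R × R × R) :=
  (sumTriples a).filter fun w => vieta w = (c, d)

theorem mem_rootTriples {a c d : R} {w : R × R × R} :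
    w ∈ rootTriples a c d ↔
      w.1 + w.2.1 + w.2.2 = -a ∧ -(w.1 * w.2.1 + w.1 * w.2.2 + w.2.1 * w.2.2) = c ∧
        w.1 * w.2.1 * w.2.2 = d := by
  simp [rootTriples, sumTriples, vieta, Prod.ext_iff]

theorem sum_card_cubicRoots (a : R) :
    ∑ cd : R × R, #(cubicRoots a cd.1 cd.2) = Fintype.card R ^ 2 := by
  simp only [cubicRoots, card_filter]
  rw [sum_comm]
  have hlines : ∀ x : R, ∑ cd : R × R, (if x ^ 3 + a * x ^ 2 = cd.1 * x + cd.2 then 1 else 0) =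
      Fintype.card R := fun x => by
    simp only [Fintype.sum_prod_type, ← sub_eq_iff_eq_add', sum_ite_eq, mem_univ, if_true,
      sum_const, card_univ, smul_eq_mul, mul_one]
  rw [Fintype.sum_congr _ _ hlines, sum_const, card_univ, smul_eq_mul, sq]

theorem card_filter_sumTriples_not_const_add (a : R) :
    #((sumTriples a).filter fun w => ¬IsConstTriple w) + #(univ.filter fun r : R => 3 * r = -a) =
      Fintype.card R ^ 2 := by
  have hall : #(sumTriples a) = Fintype.card R ^ 2 := by
    rw [sq, ← Fintype.card_prod, ← card_univ]
    refine card_nbij' (fun w => (w.1, w.2.1)) (fun p => (p.1, p.2, -a - p.1 - p.2))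
      (fun _ _ => mem_univ _) (fun p _ => ?_) (fun ⟨x, y, z⟩ hw => ?_) (fun _ _ => rfl)
    · simp only [sumTriples, coe_filter, mem_univ, true_and, Set.mem_ofPred_eq]
      ring
    · simp only [sumTriples, coe_filter, mem_univ, true_and, Set.mem_ofPred_eq] at hw
      simp only [Prod.mk.injEq, true_and]
      linear_combination -hw
  have hconst : #((sumTriples a).filter IsConstTriple) = #(univ.filter fun r : R => 3 * r = -a) := by
    refine card_nbij' (fun w => w.1) (fun r => (r, r, r)) (fun ⟨x, y, z⟩ hw => ?_)
      (fun r hr => ?_) (fun ⟨x, y, z⟩ hw => ?_) (fun _ _ => rfl)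
    all_goals simp only [sumTriples, IsConstTriple, coe_filter, mem_filter, mem_univ, true_and,
      Set.mem_ofPred_eq] at *
    · obtain ⟨hs, rfl, rfl⟩ := hw
      linear_combination hs
    · exact ⟨by linear_combination hr, trivial⟩
    · obtain ⟨-, rfl, rfl⟩ := hw
      rfl
  rw [← hconst, add_comm, card_filter_add_card_filter_not, hall]

theorem sum_card_filter_rootTriples_not_const (a : R) :
    ∑ cd : R × R, #((rootTriples a cd.1 cd.2).filter fun w => ¬IsConstTriple w) =
      #((sumTriples a).filter fun w => ¬IsConstTriple w) := by
  rw [card_eq_sum_card_fiberwise (f := vieta) (t := univ) fun _ _ => mem_univ _]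
  simp only [rootTriples, filter_comm, Prod.mk.eta]

variable [NoZeroDivisors R]

theorem cubicRoots_eq_of_mem_rootTriples {a c d : R} {w : R × R × R}
    (hw : w ∈ rootTriples a c d) : cubicRoots a c d = {w.1, w.2.1, w.2.2} := by
  obtain ⟨hs, hc, hd⟩ := mem_rootTriples.mp hw
  ext x
  have hfac : x ^ 3 + a * x ^ 2 - (c * x + d) = (x - w.1) * (x - w.2.1) * (x - w.2.2) := by
    linear_combination x ^ 2 * hs + x * hc + hd
  simp only [cubicRoots, mem_filter, mem_univ, true_and, mem_insert, mem_singleton,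
    ← sub_eq_zero (a := x ^ 3 + _), hfac, mul_eq_zero, sub_eq_zero, or_assoc]

theorem mem_rootTriples_of_mem_cubicRoots {a c d r t : R} (hr : r ∈ cubicRoots a c d)
    (ht : t ∈ cubicRoots a c d) (hrt : r ≠ t) : (r, t, -a - r - t) ∈ rootTriples a c d := by
  simp only [cubicRoots, mem_filter, mem_univ, true_and] at hr ht
  have hc : c = r ^ 2 + r * t + t ^ 2 + a * (r + t) := by
    apply mul_right_cancel₀ (sub_ne_zero.mpr hrt)
    linear_combination ht - hr
  refine mem_rootTriples.mpr ⟨by ring, by linear_combination -hc, ?_⟩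
  linear_combination hr + r * hc

theorem rootTriples_eq_perms {a c d : R} {w : R × R × R} (hw : w ∈ rootTriples a c d) :
    rootTriples a c d = perms w := by
  ext v
  constructor
  · intro hv
    have hv1 : v.1 ∈ cubicRoots a c d := by
      rw [cubicRoots_eq_of_mem_rootTriples hv]; exact mem_insert_self _ _
    rw [cubicRoots_eq_of_mem_rootTriples hw] at hv1
    obtain ⟨hsv, hcv, -⟩ := mem_rootTriples.mp hv
    obtain ⟨hsw, hcw, -⟩ := mem_rootTriples.mp hw
    obtain ⟨v1, v2, v3⟩ := v
    obtain ⟨w1, w2, w3⟩ := w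
    simp only [mem_insert, mem_singleton] at hv1
    simp only [perms, mem_insert, mem_singleton, Prod.mk.injEq]
    -- once `v₁` is matched with some `wᵢ`, the other two entries share their sum and product
    rcases hv1 with h | h | h
    · obtain ⟨rfl, rfl⟩ | ⟨rfl, rfl⟩ :=
        eq_and_eq_or_eq_and_eq_of_add_eq_of_mul_eq (s := w2) (t := w3) (s' := v2) (t' := v3)
          (by grind) (by grind) <;>
      simp [h]
    · obtain ⟨rfl, rfl⟩ | ⟨rfl, rfl⟩ :=
        eq_and_eq_or_eq_and_eq_of_add_eq_of_mul_eq (s := w1) (t := w3) (s' := v2) (t' := v3)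
          (by grind) (by grind) <;>
      simp [h]
    · obtain ⟨rfl, rfl⟩ | ⟨rfl, rfl⟩ :=
        eq_and_eq_or_eq_and_eq_of_add_eq_of_mul_eq (s := w1) (t := w2) (s' := v2) (t' := v3)
          (by grind) (by grind) <;>
      simp [h]
  · intro hv
    obtain ⟨hs, hvieta⟩ := sum_eq_and_vieta_eq_of_mem_perms hv
    simp only [rootTriples, sumTriples, mem_filter, mem_univ, true_and] at hw ⊢
    rw [hs, hvieta]
    exact hw

theorem card_filter_rootTriples_not_const_add_three (a c d : R) :
    #((rootTriples a c d).filter fun w => ¬IsConstTriple w) + 3 =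
      (if ∀ x : R, x ^ 3 + a * x ^ 2 ≠ c * x + d then 3 else 0) + 3 * #(cubicRoots a c d) := by
  rcases (rootTriples a c d).eq_empty_or_nonempty with hempty | ⟨w, hw⟩
  · have hle : #(cubicRoots a c d) ≤ 1 := card_le_one.mpr fun r hr t ht => by
      by_contra hrt
      exact (eq_empty_iff_forall_notMem.mp hempty) _ (mem_rootTriples_of_mem_cubicRoots hr ht hrt)
    have hnone : (∀ x : R, x ^ 3 + a * x ^ 2 ≠ c * x + d) ↔ #(cubicRoots a c d) = 0 := by
      simp [cubicRoots, filter_eq_empty_iff]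
    rw [hempty, filter_empty, card_empty]
    split_ifs with h <;> grind
  · have hroot : ¬∀ x : R, x ^ 3 + a * x ^ 2 ≠ c * x + d := fun h => by
      have := cubicRoots_eq_of_mem_rootTriples hw ▸ mem_insert_self w.1 _
      simp only [cubicRoots, mem_filter] at this
      exact h _ this.2
    rw [if_neg hroot, zero_add, cubicRoots_eq_of_mem_rootTriples hw, rootTriples_eq_perms hw]
    exact card_filter_perms_not_const_add_three w

theorem three_mul_card_nonHitting_add (a : R) :
    3 * #(univ.filter fun cd : R × R => ∀ x : R, x ^ 3 + a * x ^ 2 ≠ cd.1 * x + cd.2) +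
      #(univ.filter fun r : R => 3 * r = -a) = Fintype.card R ^ 2 := by
  have h := sum_congr rfl fun (cd : R × R) (_ : cd ∈ univ) =>
    card_filter_rootTriples_not_const_add_three a cd.1 cd.2
  rw [sum_add_distrib, sum_add_distrib, sum_card_filter_rootTriples_not_const, ← sum_filter,
    ← mul_sum, sum_card_cubicRoots, sum_const, sum_const, card_univ, Fintype.card_prod,
    smul_eq_mul, smul_eq_mul, ← sq] at h
  have := card_filter_sumTriples_not_const_add a
  lia

end Fintype

end Cubic

theorem stmt17_general (p : ℕ)
    {F : Type*} [Field F] [Fintype F] (hchar : CharP F p) (a : F) :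
    (p ≠ 3 →
      3 * Nat.card {cd : F × F // ∀ x : F, x ^ 3 + a * x ^ 2 ≠ cd.1 * x + cd.2}
        = Fintype.card F ^ 2 - 1) ∧
    (p = 3 → a ≠ 0 →
      3 * Nat.card {cd : F × F // ∀ x : F, x ^ 3 + a * x ^ 2 ≠ cd.1 * x + cd.2}
        = Fintype.card F ^ 2) ∧
    (p = 3 → a = 0 →
      3 * Nat.card {cd : F × F // ∀ x : F, x ^ 3 + a * x ^ 2 ≠ cd.1 * x + cd.2}
        = Fintype.card F * (Fintype.card F - 1)) := by
  classical
  have hcount := Cubic.three_mul_card_nonHitting_add a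
  rw [← Fintype.card_subtype, ← Nat.card_eq_fintype_card] at hcount
  refine ⟨fun hp3 => ?_, fun hp3 ha => ?_, fun hp3 ha => ?_⟩
  · have h3 : (3 : F) ≠ 0 := fun h => by
      have := (CharP.cast_eq_zero_iff F p 3).mp (by exact_mod_cast h)
      rcases (Nat.dvd_prime Nat.prime_three).mp this with h1 | h3
      exacts [CharP.char_ne_one F p h1, hp3 h3]
    have hone : #(univ.filter fun r : F => 3 * r = -a) = 1 :=
      card_eq_one.mpr ⟨-a / 3, by ext r; simp [eq_div_iff h3, mul_comm]⟩
    omega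
  · subst hp3
    have h3 : (3 : F) = 0 := by exact_mod_cast CharP.cast_eq_zero F 3
    have hzero : #(univ.filter fun r : F => 3 * r = -a) = 0 := by
      simp [h3, eq_comm, ha]
    omega
  · subst hp3 ha
    have h3 : (3 : F) = 0 := by exact_mod_cast CharP.cast_eq_zero F 3
    have hall : #(univ.filter fun r : F => 3 * r = -0) = Fintype.card F := by
      simp [h3]
    rw [Nat.mul_sub_one, ← sq]
    omega

theorem stmt17 (p : ℕ) (hp : p.Prime)
    {F : Type*} [Field F] [Fintype F] (hchar : CharP F p) (a : F) :
    (p ≠ 3 →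
      3 * Nat.card {cd : F × F // ∀ x : F, x ^ 3 + a * x ^ 2 ≠ cd.1 * x + cd.2}
        = Fintype.card F ^ 2 - 1) ∧
    (p = 3 → a ≠ 0 →
      3 * Nat.card {cd : F × F // ∀ x : F, x ^ 3 + a * x ^ 2 ≠ cd.1 * x + cd.2}
        = Fintype.card F ^ 2) ∧
    (p = 3 → a = 0 →
      3 * Nat.card {cd : F × F // ∀ x : F, x ^ 3 + a * x ^ 2 ≠ cd.1 * x + cd.2}
        = Fintype.card F * (Fintype.card F - 1)) :=
  stmt17_general p hchar a
end

section
/- Let q be a prime power, let s, c_1, c_2 ∈ F_q with c_1 ≠ c_2, and let f : F_q → F_q be a function such that for every x ∈ F_q either f(x) = s·x + c_1 or f(x) = s·x + c_2 (so the graph of f is contained in the union of two parallel affine lines). Let A be the number of x ∈ F_q with f(x) = s·x + c_1 and let B = q − A, and assume A ≥ 1 and B ≥ 1. Then v_0(f) = q − 2 + A·B, and for every i ≥ 3, v_i(f) = (1 if A = i, else 0) + (1 if B = i, else 0). -/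
open Finset

section

variable {F : Type*} [Field F]

noncomputable def hitCount (f : F → F) (p : F × F) : ℕ :=
  Nat.card {x : F // f x = p.1 * x + p.2}

theorem interDist_const_mul_add_affine (f : F → F) {d : F} (hd : d ≠ 0) (a₀ b₀ : F) :
    interDist (fun x => d * f x + a₀ * x + b₀) = interDist f := by
  funext i
  let e : F × F ≃ F × F :=
    ((Equiv.mulLeft₀ d hd).trans (Equiv.addRight a₀)).prodCongr
      ((Equiv.mulLeft₀ d hd).trans (Equiv.addRight b₀))
  refine (Nat.card_congr (e.subtypeEquiv fun p => ?_)).symm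
  suffices hsol : ∀ x, d * f x + a₀ * x + b₀ = (d * p.1 + a₀) * x + (d * p.2 + b₀) ↔
      f x = p.1 * x + p.2 by
    rw [← Nat.card_congr (Equiv.subtypeEquivRight hsol)]; rfl
  intro x
  rw [show (d * p.1 + a₀) * x + (d * p.2 + b₀) = d * (p.1 * x + p.2) + a₀ * x + b₀ by ring,
    add_left_inj, add_left_inj, mul_right_inj' hd]

theorem eq_line_iff_of_zero_one {g : F → F} (hg : ∀ x, g x = 0 ∨ g x = 1) {a : F} (ha : a ≠ 0)
    (b x : F) : g x = a * x + b ↔ (x = -b / a ∧ g x = 0) ∨ (x = (1 - b) / a ∧ g x = 1) := by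
  rcases hg x with h | h <;>
    simp only [h, zero_ne_one, one_ne_zero, and_true, and_false, or_false, false_or,
      eq_div_iff ha] <;>
    constructor <;> intro h' <;> linear_combination -h'

variable [Fintype F]

theorem interDist_eq_card (f : F → F) (i : ℕ) : interDist f i = #{p | hitCount f p = i} := by
  rw [interDist, Nat.card_eq_fintype_card, Fintype.card_subtype]
  rfl

variable [DecidableEq F]

theorem hitCount_eq_card (f : F → F) (p : F × F) :
    hitCount f p = #{x | f x = p.1 * x + p.2} := by
  rw [hitCount, Nat.card_eq_fintype_card, Fintype.card_subtype]

theorem hitCount_zero_slope (f : F → F) (b : F) : hitCount f (0, b) = #{x | f x = b} := by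
  simp [hitCount_eq_card]

theorem interDist_eq_card_add_card (f : F → F) (i : ℕ) :
    interDist f i = #{b | hitCount f (0, b) = i} + #{p : F × F | p.1 ≠ 0 ∧ hitCount f p = i} := by
  rw [interDist_eq_card, ← card_filter_add_card_filter_not (·.1 = 0), filter_filter, filter_filter]
  congr 1
  · refine card_nbij' Prod.snd (fun b => (0, b)) ?_ ?_ ?_ ?_ <;> intro p <;> aesop
  · simp only [and_comm]

variable {g : F → F}

theorem card_eq_zero_add_card_eq_one (hg : ∀ x, g x = 0 ∨ g x = 1) :
    #{x | g x = 0} + #{x | g x = 1} = Fintype.card F := by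
  have hone : ∀ x, g x = 1 ↔ ¬g x = 0 := fun x => by rcases hg x with h | h <;> simp [h]
  simp_rw [hone]
  exact card_filter_add_card_filter_not _

theorem hitCount_zero_slope_eq_zero (hg : ∀ x, g x = 0 ∨ g x = 1) {b : F} (hb₀ : b ≠ 0)
    (hb₁ : b ≠ 1) : hitCount g (0, b) = 0 := by
  rw [hitCount_zero_slope, card_eq_zero, filter_eq_empty_iff]
  rintro x - rfl
  exact (hg x).elim hb₀ hb₁

theorem card_hitCount_zero_slope_eq_zero (hg : ∀ x, g x = 0 ∨ g x = 1)
    (h₀ : #{x | g x = 0} ≠ 0) (h₁ : #{x | g x = 1} ≠ 0) :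
    #{b | hitCount g (0, b) = 0} = Fintype.card F - 2 := by
  have hzero : ({b | hitCount g (0, b) = 0} : Finset F) = ({0, 1} : Finset F)ᶜ := by
    ext b
    simp only [mem_filter, mem_univ, true_and, mem_compl, mem_insert, mem_singleton, not_or]
    refine ⟨?_, fun hb => hitCount_zero_slope_eq_zero hg hb.1 hb.2⟩
    rintro hb
    rw [hitCount_zero_slope] at hb
    exact ⟨by rintro rfl; exact h₀ hb, by rintro rfl; exact h₁ hb⟩
  rw [hzero, card_compl, card_pair zero_ne_one]

theorem card_hitCount_zero_slope_of_ne_zero (hg : ∀ x, g x = 0 ∨ g x = 1) {i : ℕ} (hi : i ≠ 0) :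
    #{b | hitCount g (0, b) = i} =
      (if #{x | g x = 0} = i then 1 else 0) + (if #{x | g x = 1} = i then 1 else 0) := by
  have hsupp : ({b | hitCount g (0, b) = i} : Finset F) =
      ({0, 1} : Finset F).filter (fun b => hitCount g (0, b) = i) := by
    ext b
    simp only [mem_filter, mem_univ, true_and, mem_insert, mem_singleton, iff_and_self]
    intro hb
    by_contra! hb'
    exact hi (hb ▸ hitCount_zero_slope_eq_zero hg hb'.1 hb'.2)
  rw [hsupp, card_filter, sum_pair zero_ne_one, hitCount_zero_slope, hitCount_zero_slope]

theorem hitCount_le_two (hg : ∀ x, g x = 0 ∨ g x = 1) {a : F} (ha : a ≠ 0) (b : F) :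
    hitCount g (a, b) ≤ 2 := by
  rw [hitCount_eq_card]
  refine (card_le_card (t := {-b / a, (1 - b) / a}) fun x hx => ?_).trans card_le_two
  simp only [mem_filter, mem_univ, true_and] at hx
  rcases (eq_line_iff_of_zero_one hg ha b x).1 hx with ⟨rfl, -⟩ | ⟨rfl, -⟩ <;> simp

theorem hitCount_eq_zero_iff (hg : ∀ x, g x = 0 ∨ g x = 1) {a : F} (ha : a ≠ 0) (b : F) :
    hitCount g (a, b) = 0 ↔ g (-b / a) = 1 ∧ g ((1 - b) / a) = 0 := by
  rw [hitCount_eq_card, card_eq_zero, filter_eq_empty_iff]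
  simp only [mem_univ, forall_const, eq_line_iff_of_zero_one hg ha, not_or, not_and, forall_and,
    forall_eq]
  rcases hg (-b / a) with h | h <;> rcases hg ((1 - b) / a) with h' | h' <;> simp [h, h']

-- A line of nonzero slope missing the graph is determined by its points `u`, `w` at heights 0
-- and 1, and it misses the graph exactly when `g u = 1` and `g w = 0`.
theorem card_hitCount_eq_zero_of_ne_zero_slope (hg : ∀ x, g x = 0 ∨ g x = 1) :
    #{p : F × F | p.1 ≠ 0 ∧ hitCount g p = 0} = #{x | g x = 0} * #{x | g x = 1} := by
  have hne {u w : F} (hu : g u = 1) (hw : g w = 0) : w - u ≠ 0 :=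
    sub_ne_zero.2 fun h => one_ne_zero (hu.symm.trans (h ▸ hw))
  rw [mul_comm, ← card_product]
  refine card_nbij' (fun p => (-p.2 / p.1, (1 - p.2) / p.1))
    (fun q => (1 / (q.2 - q.1), -q.1 / (q.2 - q.1))) ?_ ?_ ?_ ?_
  · rintro ⟨a, b⟩ h
    simp only [coe_filter, mem_univ, true_and, Set.mem_ofPred_eq, coe_product, Set.mem_prod] at h ⊢
    exact (hitCount_eq_zero_iff hg h.1 b).1 h.2
  · rintro ⟨u, w⟩ h
    simp only [coe_filter, mem_univ, true_and, Set.mem_ofPred_eq, coe_product, Set.mem_prod] at h ⊢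
    have huw := hne h.1 h.2
    refine ⟨by simpa using huw, (hitCount_eq_zero_iff hg (by simpa using huw) _).2 ?_⟩
    convert h using 3 <;> field_simp
    ring
  · rintro ⟨a, b⟩ h
    obtain ⟨ha, -⟩ : a ≠ 0 ∧ _ := by simpa using h
    simp only [Prod.mk.injEq]
    constructor <;> field_simp <;> ring
  · rintro ⟨u, w⟩ h
    simp only [coe_filter, mem_univ, true_and, Set.mem_ofPred_eq, coe_product, Set.mem_prod] at h
    have huw := hne h.1 h.2
    simp only [Prod.mk.injEq]
    constructor <;> field_simp
    ring

theorem interDist_zero_of_zero_one (hg : ∀ x, g x = 0 ∨ g x = 1)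
    (h₀ : #{x | g x = 0} ≠ 0) (h₁ : #{x | g x = 1} ≠ 0) :
    interDist g 0 = Fintype.card F - 2 + #{x | g x = 0} * #{x | g x = 1} := by
  rw [interDist_eq_card_add_card, card_hitCount_zero_slope_eq_zero hg h₀ h₁,
    card_hitCount_eq_zero_of_ne_zero_slope hg]

theorem interDist_of_zero_one_of_three_le (hg : ∀ x, g x = 0 ∨ g x = 1) {i : ℕ} (hi : 3 ≤ i) :
    interDist g i =
      (if #{x | g x = 0} = i then 1 else 0) + (if #{x | g x = 1} = i then 1 else 0) := by
  rw [interDist_eq_card_add_card, card_hitCount_zero_slope_of_ne_zero hg (by omega),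
    add_eq_left, card_eq_zero, filter_eq_empty_iff]
  rintro ⟨a, b⟩ - ⟨ha, hi'⟩
  have := hitCount_le_two hg (a := a) ha b
  omega

end

theorem stmt18 {F : Type*} [Field F] [Fintype F] (s c₁ c₂ : F) (hc : c₁ ≠ c₂)
    (f : F → F) (hf : ∀ x : F, f x = s * x + c₁ ∨ f x = s * x + c₂)
    (A B : ℕ) (hA : A = Nat.card {x : F // f x = s * x + c₁})
    (hB : B = Fintype.card F - A) (hA1 : 1 ≤ A) (hB1 : 1 ≤ B) :
    interDist f 0 = Fintype.card F - 2 + A * B ∧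
    ∀ i : ℕ, 3 ≤ i →
      interDist f i = (if A = i then 1 else 0) + (if B = i then 1 else 0) := by
  classical
  have hd : c₂ - c₁ ≠ 0 := sub_ne_zero.2 hc.symm
  set g : F → F := fun x => (f x - (s * x + c₁)) / (c₂ - c₁)
  have hg_zero : ∀ x, g x = 0 ↔ f x = s * x + c₁ := fun x => by simp [g, hd, sub_eq_zero]
  have hg_one : ∀ x, g x = 1 ↔ f x = s * x + c₂ := fun x => by
    rw [div_eq_one_iff_eq hd]
    constructor <;> intro h <;> linear_combination h
  have hg : ∀ x, g x = 0 ∨ g x = 1 := fun x => (hf x).imp (hg_zero x).2 (hg_one x).2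
  have hfg : interDist f = interDist g := by
    rw [← interDist_const_mul_add_affine g hd s c₁]
    congr
    funext x
    simp only [g]
    field_simp
    ring
  have hAg : A = #{x | g x = 0} := by
    rw [hA, Nat.card_eq_fintype_card, Fintype.card_subtype]
    simp_rw [hg_zero]
  have hBg : B = #{x | g x = 1} := by
    rw [hB, hAg, ← card_eq_zero_add_card_eq_one hg]
    omega
  subst hAg hBg
  rw [hfg]
  exact ⟨interDist_zero_of_zero_one hg (by omega) (by omega),
    fun i hi => interDist_of_zero_one_of_three_le hg hi⟩
end

section
/- Let q be a prime power and let S be a set of q+1 points in PG(2,q). (a) If every line of PG(2,q) meets S in at most 3 points, then the number u_0(S) of lines meeting S in no point satisfies 3·u_0(S) ≥ q(q−2). (b) If every line of PG(2,q) meets S in at most 4 points and exactly c lines meet S in exactly 3 points, then 4·u_0(S) ≥ q^2 − 3q + 2c. -/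
open scoped LinearAlgebra.Projectivization

/-- The number of points of `S` lying on the line of `PG(2,q)` determined by the
(2-dimensional) subspace `W`. -/
noncomputable def lineCount {F : Type*} [Field F]
    (S : Set (ℙ F (Fin 3 → F))) (W : Submodule F (Fin 3 → F)) : ℕ :=
  Nat.card {p : ℙ F (Fin 3 → F) // p ∈ S ∧ p.submodule ≤ W}

/-- `uCount S i` is the number of lines of `PG(2,q)` meeting `S` in exactly `i` points. -/
noncomputable def uCount {F : Type*} [Field F]
    (S : Set (ℙ F (Fin 3 → F))) (i : ℕ) : ℕ :=
  Nat.card {W : Submodule F (Fin 3 → F) // Module.finrank F W = 2 ∧ lineCount S W = i}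

/-!
Write `nₗ = |l ∩ S|`. In any 2-(q²+q+1, q+1, 1) design, such as `PG(2,q)`, a `(q+1)`-set `S`
satisfies `∑ₗ 1 = q² + q + 1`, `∑ₗ nₗ = (q+1)²` and `∑ₗ nₗ(nₗ-1) = (q+1)q` (double counting of
incident pairs and of pairs of points of `S`), hence `∑ₗ (nₗ-1)(nₗ-a) = q(q+1-a)` for every `a`.
If all `nₗ ≤ 3`, then `(n-1)(n-3) ≤ 3·[n = 0]` termwise, which gives (a) with `a = 3`;
if all `nₗ ≤ 4`, then `(n-1)(n-4) ≤ 4·[n = 0] - 2·[n = 3]`, which gives (b) with `a = 4`.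
-/

open Finset Module

section LinearSpace

variable {P L : Type*} [Fintype L] {I : P → L → Prop} [DecidableRel I]

theorem card_filter_incident_eq_one (hI : ∀ p p', p ≠ p' → ∃! l, I p l ∧ I p' l) {p p' : P}
    (h : p ≠ p') : #{l | I p l ∧ I p' l} = 1 :=
  card_eq_one_iff_existsUnique.2 (by simpa using hI p p' h)

theorem sum_card_filter_incident_of_notMem (hI : ∀ p p', p ≠ p' → ∃! l, I p l ∧ I p' l)
    {p : P} {T : Finset P} (hp : p ∉ T) :
    ∑ l with I p l, #{p' ∈ T | I p' l} = #T := by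
  have := sum_card_bipartiteAbove_eq_sum_card_bipartiteBelow (s := T) (t := {l | I p l})
    (r := fun p' l => I p' l)
  simp only [bipartiteAbove, bipartiteBelow, filter_filter] at this
  rw [← this, card_eq_sum_ones]
  refine sum_congr rfl fun p' hp' => ?_
  rw [← card_filter_incident_eq_one hI (ne_of_mem_of_not_mem hp' hp).symm]

theorem card_lines_through_mul_eq [Fintype P] [DecidableEq P]
    (hI : ∀ p p', p ≠ p' → ∃! l, I p l ∧ I p' l) {k : ℕ} (hk : ∀ l, #{p | I p l} = k) (p : P) :
    #{l | I p l} * (k - 1) = Fintype.card P - 1 := by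
  rw [← card_univ, ← card_erase_of_mem (mem_univ p),
    ← sum_card_filter_incident_of_notMem hI (notMem_erase p univ), ← sum_const_nat]
  intro l hl
  rw [filter_erase, card_erase_of_mem (by simpa using hl), hk]

theorem sum_card_offDiag_filter_incident [DecidableEq P]
    (hI : ∀ p p', p ≠ p' → ∃! l, I p l ∧ I p' l) (S : Finset P) :
    ∑ l, #({p ∈ S | I p l}.offDiag) = #S.offDiag := by
  have := sum_card_bipartiteAbove_eq_sum_card_bipartiteBelow (s := S.offDiag) (t := univ)
    (r := fun x l => I x.1 l ∧ I x.2 l)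
  simp only [bipartiteAbove, bipartiteBelow] at this
  rw [card_eq_sum_ones,
    ← sum_congr rfl fun x hx => card_filter_incident_eq_one hI (mem_offDiag.1 hx).2.2, this]
  refine sum_congr rfl fun l _ => congrArg card ?_
  ext x
  simp only [mem_offDiag, mem_filter]
  tauto

theorem card_lines_mul_eq [Fintype P] [DecidableEq P]
    (hI : ∀ p p', p ≠ p' → ∃! l, I p l ∧ I p' l) {k : ℕ} (hk : ∀ l, #{p | I p l} = k) :
    Fintype.card L * (k * k - k) = Fintype.card P * Fintype.card P - Fintype.card P := by
  have := sum_card_offDiag_filter_incident hI univ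
  simp only [offDiag_card, hk, sum_const, card_univ, smul_eq_mul] at this
  exact this

/-- A 2-(q²+q+1, q+1, 1) design, that is, a projective plane of order `q` described by its
parameters. -/
structure IsProjectivePlaneOfOrder [Fintype P] (I : P → L → Prop) [DecidableRel I] (q : ℕ) :
    Prop where
  pos : 0 < q
  existsUnique_line : ∀ p p', p ≠ p' → ∃! l, I p l ∧ I p' l
  card_points : Fintype.card P = q ^ 2 + q + 1
  card_points_on : ∀ l, #{p | I p l} = q + 1

end LinearSpace

namespace IsProjectivePlaneOfOrder

variable {P L : Type*} [Fintype P] [DecidableEq P] [Fintype L] {I : P → L → Prop}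
  [DecidableRel I] {q : ℕ}

theorem card_lines (h : IsProjectivePlaneOfOrder I q) : Fintype.card L = q ^ 2 + q + 1 := by
  have hmul := card_lines_mul_eq h.existsUnique_line h.card_points_on
  have hline : (q + 1) * (q + 1) - (q + 1) = q * (q + 1) := Nat.sub_eq_of_eq_add (by ring)
  have hpoint : (q ^ 2 + q + 1) * (q ^ 2 + q + 1) - (q ^ 2 + q + 1)
      = (q ^ 2 + q + 1) * (q * (q + 1)) := Nat.sub_eq_of_eq_add (by ring)
  rw [h.card_points, hline, hpoint] at hmul
  exact Nat.eq_of_mul_eq_mul_right (by have := h.pos; positivity) hmul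

theorem card_lines_through (h : IsProjectivePlaneOfOrder I q) (p : P) :
    #{l | I p l} = q + 1 := by
  have hmul := card_lines_through_mul_eq h.existsUnique_line h.card_points_on p
  rw [h.card_points, add_tsub_cancel_right, add_tsub_cancel_right] at hmul
  exact Nat.eq_of_mul_eq_mul_right h.pos (hmul.trans (by ring))

theorem sum_card_filter_incident (h : IsProjectivePlaneOfOrder I q) (S : Finset P) :
    ∑ l, #{p ∈ S | I p l} = #S * (q + 1) := by
  have := sum_card_bipartiteAbove_eq_sum_card_bipartiteBelow (s := S) (t := univ) (r := I)
  simp only [bipartiteAbove, bipartiteBelow] at this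
  rw [← this, ← sum_const_nat fun p _ => h.card_lines_through p]

theorem sum_sub_one_mul_sub (h : IsProjectivePlaneOfOrder I q) {S : Finset P}
    (hS : #S = q + 1) (a : ℤ) :
    ∑ l, ((#{p ∈ S | I p l} : ℤ) - 1) * (#{p ∈ S | I p l} - a) = q * (q + 1 - a) := by
  have hlines : (Fintype.card L : ℤ) = q ^ 2 + q + 1 := by exact_mod_cast h.card_lines
  have hsum : ∑ l, (#{p ∈ S | I p l} : ℤ) = (q + 1) ^ 2 := by
    rw [← Nat.cast_sum, h.sum_card_filter_incident, hS]; push_cast; ring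
  have hpairs :
      ∑ l, ((#{p ∈ S | I p l} : ℤ) ^ 2 - #{p ∈ S | I p l}) = (q + 1) ^ 2 - (q + 1) := by
    have := congrArg (Nat.cast : ℕ → ℤ) (sum_card_offDiag_filter_incident h.existsUnique_line S)
    simp only [offDiag_card, Nat.cast_sum, Nat.cast_sub (Nat.le_mul_self _), Nat.cast_mul,
      hS] at this
    push_cast at this
    simpa only [sq] using this
  calc ∑ l, ((#{p ∈ S | I p l} : ℤ) - 1) * (#{p ∈ S | I p l} - a)
      = ∑ l, (((#{p ∈ S | I p l} : ℤ) ^ 2 - #{p ∈ S | I p l}) - a * #{p ∈ S | I p l} + a) :=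
        sum_congr rfl fun _ _ => by ring
    _ = q * (q + 1 - a) := by
        rw [sum_add_distrib, sum_sub_distrib, ← mul_sum, hpairs, hsum, sum_const, card_univ,
          nsmul_eq_mul, hlines]
        ring

theorem le_three_mul_card_filter_eq_zero (h : IsProjectivePlaneOfOrder I q) {S : Finset P}
    (hS : #S = q + 1) (hdeg : ∀ l, #{p ∈ S | I p l} ≤ 3) :
    (q : ℤ) * (q - 2) ≤ 3 * #{l | #{p ∈ S | I p l} = 0} := by
  calc (q : ℤ) * (q - 2) = ∑ l, ((#{p ∈ S | I p l} : ℤ) - 1) * (#{p ∈ S | I p l} - 3) := by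
        rw [h.sum_sub_one_mul_sub hS]; ring
    _ ≤ ∑ l, if #{p ∈ S | I p l} = 0 then 3 else 0 := by
        refine sum_le_sum fun l _ => ?_
        have hl := hdeg l
        generalize #{p ∈ S | I p l} = m at hl ⊢
        interval_cases m <;> norm_num
    _ = 3 * #{l | #{p ∈ S | I p l} = 0} := by
        rw [← sum_filter, sum_const, nsmul_eq_mul, mul_comm]

theorem le_four_mul_card_filter_eq_zero (h : IsProjectivePlaneOfOrder I q) {S : Finset P}
    (hS : #S = q + 1) (hdeg : ∀ l, #{p ∈ S | I p l} ≤ 4) :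
    (q : ℤ) ^ 2 - 3 * q + 2 * #{l | #{p ∈ S | I p l} = 3}
      ≤ 4 * #{l | #{p ∈ S | I p l} = 0} := by
  have key : ∑ l, ((#{p ∈ S | I p l} : ℤ) - 1) * (#{p ∈ S | I p l} - 4)
      ≤ ∑ l, ((if #{p ∈ S | I p l} = 0 then 4 else 0)
        - if #{p ∈ S | I p l} = 3 then 2 else 0) := by
    refine sum_le_sum fun l _ => ?_
    have hl := hdeg l
    generalize #{p ∈ S | I p l} = m at hl ⊢
    interval_cases m <;> norm_num
  rw [h.sum_sub_one_mul_sub hS, sum_sub_distrib, ← sum_filter, ← sum_filter, sum_const,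
    sum_const, nsmul_eq_mul, nsmul_eq_mul] at key
  linarith

end IsProjectivePlaneOfOrder

namespace Projectivization

variable {K V : Type*} [DivisionRing K] [AddCommGroup V] [Module K V]

theorem exists_finrank_eq_two_le {x y : ℙ K V} (h : x ≠ y) :
    ∃ W : Submodule K V, finrank K W = 2 ∧ x.submodule ≤ W ∧ y.submodule ≤ W := by
  induction x using ind with | h v hv =>
  induction y using ind with | h w hw =>
  rw [← independent_pair_iff_ne, independent_mk_iff_LinearIndependent] at h
  refine ⟨Submodule.span K {v, w}, ?_, ?_, ?_⟩
  · rw [← Matrix.range_cons_cons_empty v w ![]]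
    simp [finrank_span_eq_card h]
  all_goals simp [submodule_mk, Submodule.span_singleton_le_iff_mem, Submodule.mem_span_of_mem]

theorem existsUnique_line {x y : ℙ K V} (h : x ≠ y) :
    ∃! W : {W : Submodule K V // finrank K W = 2}, x.submodule ≤ W ∧ y.submodule ≤ W := by
  obtain ⟨W, hW, hxW, hyW⟩ := exists_finrank_eq_two_le h
  refine ⟨⟨W, hW⟩, ⟨hxW, hyW⟩, fun W' ⟨hxW', hyW'⟩ => Subtype.ext ?_⟩
  simp only [← Submodule.mem_projectivization_iff_submodule_le] at *
  exact line_unique h _ _ W'.2 hW hxW' hyW' hxW hyW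

theorem range_map_subtype (W : Submodule K V) :
    Set.range (map W.subtype W.injective_subtype) = {p | p.submodule ≤ W} := by
  ext p
  induction p using ind with | h v hv =>
  simp only [Set.mem_ofPred_eq, submodule_mk, Submodule.span_singleton_le_iff_mem, Set.mem_range]
  constructor
  · rintro ⟨x, hx⟩
    induction x using ind with | h w hw =>
    rw [← Submodule.span_singleton_le_iff_mem, ← submodule_mk v hv, ← hx, map_mk, submodule_mk,
      Submodule.span_singleton_le_iff_mem]
    exact w.2
  · intro hvW
    exact ⟨mk K ⟨v, hvW⟩ (by simpa using hv), by rw [map_mk]; rfl⟩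

theorem card_submodule_le_of_finrank_eq_two [Finite K] {W : Submodule K V}
    (hW : finrank K W = 2) : Nat.card {p : ℙ K V // p.submodule ≤ W} = Nat.card K + 1 := by
  rw [← Set.coe_ofPred, ← range_map_subtype, Nat.card_range_of_injective (map_injective _ _),
    card_of_finrank_two K W hW]

theorem isProjectivePlaneOfOrder {F V : Type*} [Field F] [Fintype F]
    [AddCommGroup V] [Module F V] (hV : finrank F V = 3) [Fintype (ℙ F V)]
    [DecidableRel fun (p : ℙ F V) (W : {W : Submodule F V // finrank F W = 2}) =>
      p.submodule ≤ W.1] :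
    IsProjectivePlaneOfOrder (fun (p : ℙ F V) (W : {W : Submodule F V // finrank F W = 2}) =>
      p.submodule ≤ W.1) (Fintype.card F) where
  pos := Fintype.card_pos
  existsUnique_line _ _ := existsUnique_line
  card_points := by
    rw [Fintype.card_eq_nat_card, card_of_finrank F V hV, Nat.card_eq_fintype_card]
    simp [sum_range_succ]
    ring
  card_points_on W := by
    rw [← Fintype.card_subtype, Fintype.card_eq_nat_card,
      card_submodule_le_of_finrank_eq_two W.2, Nat.card_eq_fintype_card]

end Projectivization

theorem stmt19 {F : Type*} [Field F] [Fintype F]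
    (S : Set (ℙ F (Fin 3 → F))) (hS : Nat.card S = Fintype.card F + 1) :
    ((∀ W : Submodule F (Fin 3 → F), Module.finrank F W = 2 → lineCount S W ≤ 3) →
      (Fintype.card F : ℤ) * ((Fintype.card F : ℤ) - 2) ≤ 3 * (uCount S 0 : ℤ)) ∧
    (∀ c : ℕ, (∀ W : Submodule F (Fin 3 → F), Module.finrank F W = 2 → lineCount S W ≤ 4) →
      uCount S 3 = c →
      (Fintype.card F : ℤ) ^ 2 - 3 * (Fintype.card F : ℤ) + 2 * (c : ℤ)
        ≤ 4 * (uCount S 0 : ℤ)) := by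
  classical
  let _ : Fintype (ℙ F (Fin 3 → F)) := Fintype.ofFinite _
  let _ : Fintype {W : Submodule F (Fin 3 → F) // finrank F W = 2} := Fintype.ofFinite _
  have hplane := Projectivization.isProjectivePlaneOfOrder (F := F) (V := Fin 3 → F) (by simp)
  let T : Finset (ℙ F (Fin 3 → F)) := {p | p ∈ S}
  have hT : #T = Fintype.card F + 1 := by
    rw [← hS, Nat.card_eq_fintype_card, Fintype.card_subtype]
  have hline (W : {W : Submodule F (Fin 3 → F) // finrank F W = 2}) :
      lineCount S W = #{p ∈ T | p.submodule ≤ W.1} := by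
    rw [lineCount, Nat.card_eq_fintype_card, Fintype.card_subtype, filter_filter]
  have hu (i : ℕ) : uCount S i = #{W : {W : Submodule F (Fin 3 → F) // finrank F W = 2} |
      #{p ∈ T | p.submodule ≤ W.1} = i} := by
    rw [uCount, ← Nat.card_congr (Equiv.subtypeSubtypeEquivSubtypeInter _ _),
      Nat.card_eq_fintype_card, Fintype.card_subtype]
    simp only [hline]
  refine ⟨fun hdeg => ?_, fun c hdeg hc => ?_⟩
  · rw [hu]
    exact hplane.le_three_mul_card_filter_eq_zero hT fun W => hline W ▸ hdeg W W.2
  · rw [← hc, hu, hu]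
    exact hplane.le_four_mul_card_filter_eq_zero hT fun W => hline W ▸ hdeg W W.2
end
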